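/- arXiv:1606.03926 — 7 statements merged into one kernel-verified Lean document; each statement's English description precedes it below -/
import Mathlib

section
/- Let N ⊆ M be pointed metric spaces with the distinguished point 0 ∈ N. If there exists a Lipschitz retraction r : M → N, then the Lipschitz-free space F(M) is linearly isomorphic to the direct sum F(N) ⊕ F_N(M). -/
open scoped NNReal ENNReal

/-- `F` together with the Dirac map `δ : M → F` is (a realization of) the Lipschitz-free
space `𝓕(M)` of the pointed metric space `(M, base)`, characterized by its universal
property. -/
structure IsLipFreeSpace (M : Type*) [MetricSpace M] (base : M)
    (F : Type*) [NormedAddCommGroup F] [NormedSpace ℝ F] [CompleteSpace F]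
    (δ : M → F) : Prop where
  isometry : Isometry δ
  map_base : δ base = 0
  dense_span : (Submodule.span ℝ (Set.range δ)).topologicalClosure = ⊤
  extend : ∀ (Z : Type) [NormedAddCommGroup Z] [NormedSpace ℝ Z] [CompleteSpace Z]
    (L : ℝ≥0) (f : M → Z), LipschitzWith L f → f base = 0 →
    ∃ T : F →L[ℝ] Z, ‖T‖ ≤ (L : ℝ) ∧ ∀ x : M, T (δ x) = f x

/-- `F` together with `δ : M → F` is (a realization of) the relative Lipschitz-free space
`𝓕_N(M) ≅ 𝓕(M)/𝓕(N)`, again characterized by the universal property (with respect to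
Lipschitz functions vanishing on `N`). -/
structure IsRelLipFreeSpace (M : Type*) [MetricSpace M] (N : Set M)
    (F : Type*) [NormedAddCommGroup F] [NormedSpace ℝ F] [CompleteSpace F]
    (δ : M → F) : Prop where
  lipschitz : LipschitzWith 1 δ
  vanish : ∀ x ∈ N, δ x = 0
  dense_span : (Submodule.span ℝ (Set.range δ)).topologicalClosure = ⊤
  extend : ∀ (Z : Type) [NormedAddCommGroup Z] [NormedSpace ℝ Z] [CompleteSpace Z]
    (L : ℝ≥0) (f : M → Z), LipschitzWith L f → (∀ x ∈ N, f x = 0) →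
    ∃ T : F →L[ℝ] Z, ‖T‖ ≤ (L : ℝ) ∧ ∀ x : M, T (δ x) = f x

/-- `N` is an `(a,b)`-net for some `a, b > 0`. -/
def IsNet {X : Type*} [MetricSpace X] (N : Set X) : Prop :=
  ∃ a b : ℝ, 0 < a ∧ 0 < b ∧
    (∀ x ∈ N, ∀ y ∈ N, x ≠ y → a ≤ dist x y) ∧
    (∀ x : X, EMetric.infEdist x N < ENNReal.ofReal b)

/-- A sequence `e` is a Schauder basis of `Y`: every vector has a unique expansion. -/
def IsSchauderBasis {Y : Type*} [NormedAddCommGroup Y] [NormedSpace ℝ Y] (e : ℕ → Y) : Prop :=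
  ∀ y : Y, ∃! a : ℕ → ℝ,
    Filter.Tendsto (fun n => ∑ i ∈ Finset.range n, a i • e i) Filter.atTop (nhds y)

/-- Density character of a topological space. -/
noncomputable def densityCharacter (M : Type u) [TopologicalSpace M] : Cardinal.{u} :=
  ⨅ s : {s : Set M // Dense s}, Cardinal.mk s

/-! The retraction linearizes to `S : 𝓕(M) → 𝓕(N)`, `δ x ↦ δ (r x)`, and the inclusion `N ⊆ M`
to `U : 𝓕(N) → 𝓕(M)`. The quotient map `Q : 𝓕(M) → 𝓕_N(M)` has the right inverse
`V : δ x ↦ δ x - δ (r x)`, well defined because `x ↦ δ x - δ (r x)` is Lipschitz and vanishes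
on `N`. Then `μ ↦ (S μ, Q μ)` and `(ν, η) ↦ U ν + V η` are mutually inverse, which it suffices to
check on Dirac measures since their span is dense. -/

section

variable {M : Type*} [MetricSpace M] {Z : Type*} [NormedAddCommGroup Z] [NormedSpace ℝ Z]
  {F : Type*} [NormedAddCommGroup F] [NormedSpace ℝ F] [CompleteSpace F] {δ : M → F}

theorem IsLipFreeSpace.ext_dirac {base : M} (hF : IsLipFreeSpace M base F δ)
    {S T : F →L[ℝ] Z} (h : ∀ x, S (δ x) = T (δ x)) : S = T :=
  ContinuousLinearMap.ext_on (Submodule.dense_iff_topologicalClosure_eq_top.mpr hF.dense_span)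
    (by rintro _ ⟨x, rfl⟩; exact h x)

theorem IsRelLipFreeSpace.ext_dirac {N : Set M} (hF : IsRelLipFreeSpace M N F δ)
    {S T : F →L[ℝ] Z} (h : ∀ x, S (δ x) = T (δ x)) : S = T :=
  ContinuousLinearMap.ext_on (Submodule.dense_iff_topologicalClosure_eq_top.mpr hF.dense_span)
    (by rintro _ ⟨x, rfl⟩; exact h x)

theorem IsLipFreeSpace.exists_linearization {base : M} (hF : IsLipFreeSpace M base F δ)
    {M' : Type*} [MetricSpace M'] {base' : M'} {F' : Type} [NormedAddCommGroup F']
    [NormedSpace ℝ F'] [CompleteSpace F'] {δ' : M' → F'} (hF' : IsLipFreeSpace M' base' F' δ')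
    {φ : M → M'} {K : ℝ≥0} (hφ : LipschitzWith K φ) (hφ_base : φ base = base') :
    ∃ T : F →L[ℝ] F', ∀ x, T (δ x) = δ' (φ x) := by
  have hlip : LipschitzWith K (δ' ∘ φ) := by
    simpa using hF'.isometry.lipschitz.comp hφ
  obtain ⟨T, -, hT⟩ := hF.extend F' K (δ' ∘ φ) hlip (by simp [hφ_base, hF'.map_base])
  exact ⟨T, hT⟩

end

/-- If `N ⊆ M` are pointed metric spaces with distinguished point
`base ∈ N` and there is a Lipschitz retraction `r : M → N`, then
`𝓕(M) ≅ 𝓕(N) ⊕ 𝓕_N(M)`. -/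
theorem stmt_0 (M : Type*) [MetricSpace M] (base : M) (N : Set M) (hbase : base ∈ N)
    (r : M → M) (K : ℝ≥0) (hr : LipschitzWith K r)
    (hrange : ∀ x : M, r x ∈ N) (hretr : ∀ x ∈ N, r x = x)
    (FM : Type) [NormedAddCommGroup FM] [NormedSpace ℝ FM] [CompleteSpace FM]
    (δM : M → FM) (hFM : IsLipFreeSpace M base FM δM)
    (FN : Type) [NormedAddCommGroup FN] [NormedSpace ℝ FN] [CompleteSpace FN]
    (δN : ↥N → FN) (hFN : IsLipFreeSpace ↥N ⟨base, hbase⟩ FN δN)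
    (FNM : Type) [NormedAddCommGroup FNM] [NormedSpace ℝ FNM] [CompleteSpace FNM]
    (δNM : M → FNM) (hFNM : IsRelLipFreeSpace M N FNM δNM) :
    Nonempty (FM ≃L[ℝ] FN × FNM) := by
  obtain ⟨S, hS⟩ :=
    hFM.exists_linearization hFN (hr.subtype_mk hrange) (Subtype.ext (hretr base hbase))
  obtain ⟨U, hU⟩ := hFN.exists_linearization hFM (LipschitzWith.subtype_val N) rfl
  obtain ⟨Q, -, hQ⟩ := hFM.extend FNM 1 δNM hFNM.lipschitz (hFNM.vanish base hbase)
  have hδr : LipschitzWith K (δM ∘ r) := by simpa using hFM.isometry.lipschitz.comp hr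
  obtain ⟨V, -, hV⟩ := hFNM.extend FM (1 + K) (fun x => δM x - δM (r x))
    (hFM.isometry.lipschitz.sub hδr) (fun x hx => by simp [hretr x hx])
  refine ⟨.equivOfInverse' (S.prod Q) (U.coprod V) ?_ ?_⟩
  · refine ContinuousLinearMap.prod_ext (hFN.ext_dirac fun n => ?_) (hFNM.ext_dirac fun x => ?_)
    · have hrn : (⟨r n, hrange n⟩ : N) = n := Subtype.ext (hretr n n.2)
      simp [hS, hQ, hU, hrn, hFNM.vanish n n.2]
    · simp [hS, hQ, hV, hretr (r x) (hrange x), hFNM.vanish (r x) (hrange x)]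
  · exact hFM.ext_dirac fun x => by simp [hS, hQ, hU, hV]
end

section
/- Let (M,d,0) be a pointed metric space, K > 0, let {M_α}_{α∈Γ} be a family of pairwise disjoint subsets of M, and let N be a subset of M∖⋃_{α∈Γ} M_α containing 0. Suppose that for every β ∈ Γ and every x ∈ M_β one has d(x, ⋃_{α∈Γ, α≠β} M_α) ≥ K·d(x,N). Then F_N(N ∪ ⋃_{α∈Γ} M_α) is linearly isomorphic to the ℓ1(Γ)-sum (⊕_{α∈Γ} F_N(N ∪ M_α))_{ℓ1(Γ)}. In particular, if N = {0}, then F({0} ∪ ⋃_{α∈Γ} M_α) is isomorphic to (⊕_{α∈Γ} F({0} ∪ M_α))_{ℓ1(Γ)}. -/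
open scoped NNReal ENNReal

/-!
The two spaces are compared through operators that are mutually inverse on Dirac functionals,
hence everywhere by density. From `ℓ₁` to `𝓕_N(N ∪ ⋃ M_α)` one sums the canonical maps
`𝓕_N(N ∪ M_α) → 𝓕_N(N ∪ ⋃ M_α)`, all of norm at most `1`. The inverse extends, by the universal
property, the map sending `x ∈ M_α` to `δ(x)` in the `α`-th summand and `N` to `0`. That map is
Lipschitz: on a single piece it is the Dirac map of the piece, and for points `x`, `y` in no
common piece both images have norm at most the distance to `N`, while the separation hypothesis
gives `min 1 K · d(x, N) ≤ d(x, y)`.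
-/

open Function Set Metric

namespace lp

section

variable {𝕜 ι : Type*} [NormedField 𝕜] {E : ι → Type*} [∀ i, NormedAddCommGroup (E i)]
  [∀ i, NormedSpace 𝕜 (E i)]

theorem hasSum_norm_one (f : lp E 1) : HasSum (fun i ↦ ‖f i‖) ‖f‖ := by
  simpa using lp.hasSum_norm (p := 1) (by simp) f

theorem topologicalClosure_span_iUnion_image_single {p : ℝ≥0∞} [Fact (1 ≤ p)] (hp : p ≠ ⊤)
    [DecidableEq ι] {s : ∀ i, Set (E i)}
    (hs : ∀ i, (Submodule.span 𝕜 (s i)).topologicalClosure = ⊤) :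
    (Submodule.span 𝕜 (⋃ i, lp.single p i '' s i)).topologicalClosure = ⊤ := by
  set C := (Submodule.span 𝕜 (⋃ i, lp.single p i '' s i)).topologicalClosure
  have hC : IsClosed (C : Set (lp E p)) := Submodule.isClosed_topologicalClosure _
  have hsingle (i : ι) (a : E i) : lp.single p i a ∈ C := by
    let D := C.comap (singleContinuousLinearMap 𝕜 E p i : E i →ₗ[𝕜] lp E p)
    have hsD : Submodule.span 𝕜 (s i) ≤ D := Submodule.span_le.2 fun b hb ↦
      Submodule.le_topologicalClosure _ (Submodule.subset_span (mem_iUnion.2 ⟨i, b, hb, rfl⟩))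
    have hD := Submodule.topologicalClosure_minimal _ hsD
      (hC.preimage (singleContinuousLinearMap 𝕜 E p i).continuous)
    exact hD (hs i ▸ Submodule.mem_top)
  refine eq_top_iff.2 fun f _ ↦ hC.mem_of_tendsto (lp.hasSum_single hp f) ?_
  exact Filter.Eventually.of_forall fun t ↦ Submodule.sum_mem _ fun i _ ↦ hsingle i (f i)

end

section tsumMap

variable {𝕜 ι : Type*} [NontriviallyNormedField 𝕜] {E : ι → Type*} [∀ i, NormedAddCommGroup (E i)]
  [∀ i, NormedSpace 𝕜 (E i)] {F : Type*} [NormedAddCommGroup F] [NormedSpace 𝕜 F] [CompleteSpace F]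
  (T : ∀ i, E i →L[𝕜] F) (C : ℝ) (hT : ∀ i, ‖T i‖ ≤ C)

omit [CompleteSpace F] in
include hT in
theorem summable_norm_apply (f : lp E 1) : Summable fun i ↦ ‖T i (f i)‖ :=
  .of_nonneg_of_le (fun _ ↦ norm_nonneg _) (fun i ↦ (T i).le_of_opNorm_le (hT i) (f i))
    ((hasSum_norm_one f).summable.mul_left C)

include hT in
theorem summable_apply (f : lp E 1) : Summable fun i ↦ T i (f i) :=
  (summable_norm_apply T C hT f).of_norm

noncomputable def tsumMap : lp E 1 →L[𝕜] F :=
  LinearMap.mkContinuous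
    { toFun f := ∑' i, T i (f i)
      map_add' f g := by
        simp only [coeFn_add, Pi.add_apply, map_add]
        exact (summable_apply T C hT f).tsum_add (summable_apply T C hT g)
      map_smul' c f := by
        simp only [coeFn_smul, Pi.smul_apply, map_smul]
        exact (summable_apply T C hT f).tsum_const_smul c }
    C fun f ↦ by
      have hnorm := summable_norm_apply T C hT f
      calc ‖∑' i, T i (f i)‖ ≤ ∑' i, ‖T i (f i)‖ := norm_tsum_le_tsum_norm hnorm
        _ ≤ ∑' i, C * ‖f i‖ := hnorm.tsum_le_tsum (fun i ↦ (T i).le_of_opNorm_le (hT i) (f i))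
            ((hasSum_norm_one f).summable.mul_left C)
        _ = C * ‖f‖ := by rw [tsum_mul_left, (hasSum_norm_one f).tsum_eq]

theorem tsumMap_single [DecidableEq ι] (i : ι) (a : E i) :
    tsumMap T C hT (lp.single 1 i a) = T i a := by
  change ∑' j, T j (lp.single 1 i a j) = T i a
  rw [tsum_eq_single i fun j hj ↦ by rw [lp.single_apply_ne _ _ _ hj, map_zero],
    lp.single_apply_self]

end tsumMap

end lp

theorem IsRelLipFreeSpace.nonempty_continuousLinearEquiv {X : Type*} [MetricSpace X] {N : Set X}
    {F : Type*} [NormedAddCommGroup F] [NormedSpace ℝ F] [CompleteSpace F] {δ : X → F}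
    (hF : IsRelLipFreeSpace X N F δ) {E : Type} [NormedAddCommGroup E] [NormedSpace ℝ E]
    [CompleteSpace E] {e : X → E} {L : ℝ≥0} (he : LipschitzWith L e) (he0 : ∀ x ∈ N, e x = 0)
    (he_dense : (Submodule.span ℝ (range e)).topologicalClosure = ⊤)
    (T : E →L[ℝ] F) (hT : ∀ x, T (e x) = δ x) : Nonempty (F ≃L[ℝ] E) := by
  obtain ⟨R, -, hR⟩ := hF.extend E L e he he0
  have hTR : T.comp R = .id ℝ F := ContinuousLinearMap.ext_on
    (Submodule.dense_iff_topologicalClosure_eq_top.2 hF.dense_span)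
    (by rintro _ ⟨x, rfl⟩; simp [hR, hT])
  have hRT : R.comp T = .id ℝ E := ContinuousLinearMap.ext_on
    (Submodule.dense_iff_topologicalClosure_eq_top.2 he_dense)
    (by rintro _ ⟨x, rfl⟩; simp [hR, hT])
  exact ⟨.equivOfInverse R T (fun x ↦ congr($hTR x)) (fun y ↦ congr($hRT y))⟩

section InfEDist

variable {M : Type*} [MetricSpace M] {N : Set M} {x y : M}

theorem ofReal_norm_le_infEDist {A : Set M} {E : Type*} [NormedAddCommGroup E]
    {f : ↥(N ∪ A) → E} (hf : LipschitzWith 1 f) (hf0 : ∀ y : ↥(N ∪ A), (y : M) ∈ N → f y = 0)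
    (y : ↥(N ∪ A)) : ENNReal.ofReal ‖f y‖ ≤ infEDist (y : M) N := by
  refine le_infEDist.2 fun n hn ↦ ?_
  have h := hf.dist_le_mul y ⟨n, Or.inl hn⟩
  rw [hf0 ⟨n, Or.inl hn⟩ hn, dist_zero_right, NNReal.coe_one, one_mul, Subtype.dist_eq] at h
  rw [edist_dist]
  exact ENNReal.ofReal_le_ofReal h

theorem min_one_mul_infEDist_le {Γ : Type*} {Ms : Γ → Set M} {K : ℝ≥0}
    (hsep : ∀ β, ∀ x ∈ Ms β, (K : ℝ≥0∞) * infEDist x N ≤ infEDist x (⋃ (α) (_ : α ≠ β), Ms α))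
    {α : Γ} (hx : x ∈ Ms α) (hy : y ∈ N ∪ ⋃ β, Ms β) (hyα : y ∉ Ms α) :
    ((min 1 K : ℝ≥0) : ℝ≥0∞) * infEDist x N ≤ edist x y := by
  rcases hy with hy | hy
  · calc ((min 1 K : ℝ≥0) : ℝ≥0∞) * infEDist x N ≤ 1 * infEDist x N := by gcongr; simp
      _ ≤ edist x y := by rw [one_mul]; exact infEDist_le_edist_of_mem hy
  · obtain ⟨β, hβ⟩ := mem_iUnion.1 hy
    have hβα : β ≠ α := by rintro rfl; exact hyα hβ
    calc ((min 1 K : ℝ≥0) : ℝ≥0∞) * infEDist x N ≤ K * infEDist x N := by gcongr; simp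
      _ ≤ infEDist x (⋃ (β) (_ : β ≠ α), Ms β) := hsep α x hx
      _ ≤ edist x y := infEDist_le_edist_of_mem (mem_iUnion₂.2 ⟨β, hβα, hβ⟩)

end InfEDist

section Glue

variable {M : Type*} {Γ : Type*} [DecidableEq Γ] {Ms : Γ → Set M} {N : Set M}
  {G : Γ → Type*} [∀ α, NormedAddCommGroup (G α)]

open Classical in
noncomputable def lpGlue (Ms : Γ → Set M) (N : Set M) (g : ∀ α, ↥(N ∪ Ms α) → G α) (x : M) :
    lp G 1 :=
  if h : ∃ α, x ∈ Ms α then lp.single 1 h.choose (g h.choose ⟨x, Or.inr h.choose_spec⟩) else 0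

variable {g : ∀ α, ↥(N ∪ Ms α) → G α} {x y : M}

theorem lpGlue_of_mem (hdisj : Pairwise (Disjoint on Ms)) {α : Γ} (hx : x ∈ Ms α) :
    lpGlue Ms N g x = lp.single 1 α (g α ⟨x, Or.inr hx⟩) := by
  have h : ∃ β, x ∈ Ms β := ⟨α, hx⟩
  obtain rfl : h.choose = α := by_contra fun hne ↦ disjoint_left.1 (hdisj hne) h.choose_spec hx
  rw [lpGlue, dif_pos h]

theorem lpGlue_of_notMem (hx : x ∉ ⋃ α, Ms α) : lpGlue Ms N g x = 0 := by
  rw [lpGlue, dif_neg fun ⟨α, hα⟩ ↦ hx (mem_iUnion.2 ⟨α, hα⟩)]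

theorem lpGlue_eq_zero_of_mem (hg0 : ∀ α (y : ↥(N ∪ Ms α)), (y : M) ∈ N → g α y = 0)
    (hx : x ∈ N) : lpGlue Ms N g x = 0 := by
  unfold lpGlue
  split_ifs with h
  · rw [hg0 _ _ hx, lp.single_zero]
  · rfl

theorem topologicalClosure_span_range_lpGlue [∀ α, NormedSpace ℝ (G α)]
    (hdisj : Pairwise (Disjoint on Ms))
    (hg0 : ∀ α (y : ↥(N ∪ Ms α)), (y : M) ∈ N → g α y = 0)
    (hg_dense : ∀ α, (Submodule.span ℝ (range (g α))).topologicalClosure = ⊤) :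
    (Submodule.span ℝ (range ((N ∪ ⋃ α, Ms α).domRestrict (lpGlue Ms N g)))).topologicalClosure
      = ⊤ := by
  refine eq_top_iff.2 ((lp.topologicalClosure_span_iUnion_image_single (by simp) hg_dense).ge.trans
    (Submodule.topologicalClosure_mono (Submodule.span_le.2 ?_)))
  intro v hv
  obtain ⟨α, _, ⟨⟨y, hy | hy⟩, rfl⟩, rfl⟩ := mem_iUnion.1 hv
  · simp [hg0 α ⟨y, Or.inl hy⟩ hy]
  · refine Submodule.subset_span ⟨⟨y, Or.inr (mem_iUnion.2 ⟨α, hy⟩)⟩, ?_⟩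
    exact lpGlue_of_mem hdisj hy

variable [MetricSpace M]

theorem min_one_mul_norm_lpGlue_le {K : ℝ≥0}
    (hsep : ∀ β, ∀ x ∈ Ms β, (K : ℝ≥0∞) * infEDist x N ≤ infEDist x (⋃ (α) (_ : α ≠ β), Ms α))
    (hdisj : Pairwise (Disjoint on Ms)) (hg : ∀ α, LipschitzWith 1 (g α))
    (hg0 : ∀ α (y : ↥(N ∪ Ms α)), (y : M) ∈ N → g α y = 0)
    (hy : y ∈ N ∪ ⋃ β, Ms β) (hxy : ∀ α, x ∈ Ms α → y ∉ Ms α) :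
    (min 1 K : ℝ≥0) * ‖lpGlue Ms N g x‖ ≤ dist x y := by
  by_cases hx : x ∈ ⋃ α, Ms α
  · obtain ⟨α, hα⟩ := mem_iUnion.1 hx
    rw [lpGlue_of_mem hdisj hα, lp.norm_single (by norm_num),
      ← ENNReal.ofReal_le_ofReal_iff dist_nonneg, ENNReal.ofReal_mul (by positivity), ← edist_dist,
      ENNReal.ofReal_coe_nnreal]
    calc ((min 1 K : ℝ≥0) : ℝ≥0∞) * ENNReal.ofReal ‖g α ⟨x, Or.inr hα⟩‖
        ≤ (min 1 K : ℝ≥0) * infEDist x N := by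
          gcongr; exact ofReal_norm_le_infEDist (hg α) (hg0 α) _
      _ ≤ edist x y := min_one_mul_infEDist_le hsep hα hy (hxy α hα)
  · rw [lpGlue_of_notMem hx, norm_zero, mul_zero]
    exact dist_nonneg

theorem lipschitzOnWith_lpGlue {K : ℝ≥0} (hK : 0 < K)
    (hsep : ∀ β, ∀ x ∈ Ms β, (K : ℝ≥0∞) * infEDist x N ≤ infEDist x (⋃ (α) (_ : α ≠ β), Ms α))
    (hdisj : Pairwise (Disjoint on Ms)) (hg : ∀ α, LipschitzWith 1 (g α))
    (hg0 : ∀ α (y : ↥(N ∪ Ms α)), (y : M) ∈ N → g α y = 0) :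
    LipschitzOnWith (2 * (min 1 K)⁻¹) (lpGlue Ms N g) (N ∪ ⋃ α, Ms α) := by
  have hc : (0 : ℝ) < min 1 (K : ℝ) := lt_min one_pos hK
  refine LipschitzOnWith.of_dist_le_mul fun x hx y hy ↦ ?_
  rw [show ((2 * (min 1 K)⁻¹ : ℝ≥0) : ℝ) = 2 / min 1 (K : ℝ) by push_cast; ring]
  by_cases hxy : ∃ α, x ∈ Ms α ∧ y ∈ Ms α
  · obtain ⟨α, hxα, hyα⟩ := hxy
    rw [lpGlue_of_mem hdisj hxα, lpGlue_of_mem hdisj hyα, (lp.isometry_single α).dist_eq]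
    calc dist (g α ⟨x, _⟩) (g α ⟨y, _⟩) ≤ 1 * dist x y := (hg α).dist_le_mul _ _
      _ ≤ 2 / min 1 (K : ℝ) * dist x y := by
        gcongr
        rw [le_div_iff₀ hc]
        linarith [min_le_left 1 (K : ℝ)]
  · simp only [not_exists, not_and] at hxy
    have hx' := min_one_mul_norm_lpGlue_le hsep hdisj hg hg0 hy hxy
    have hy' := min_one_mul_norm_lpGlue_le (x := y) hsep hdisj hg hg0 hx
      fun α hyα hxα ↦ hxy α hxα hyα
    rw [dist_comm y] at hy'
    push_cast at hx' hy'
    calc dist (lpGlue Ms N g x) (lpGlue Ms N g y)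
        ≤ ‖lpGlue Ms N g x‖ + ‖lpGlue Ms N g y‖ := dist_le_norm_add_norm _ _
      _ ≤ 2 / min 1 (K : ℝ) * dist x y := by
        rw [div_mul_eq_mul_div, le_div_iff₀ hc]
        linarith

end Glue

theorem stmt_1_general (M : Type*) [MetricSpace M]
    (Γ : Type) (Ms : Γ → Set M) (N : Set M)
    (hdisj : ∀ α β : Γ, α ≠ β → Disjoint (Ms α) (Ms β))
    (K : ℝ≥0) (hK : 0 < K)
    (hsep : ∀ β : Γ, ∀ x ∈ Ms β,
      (K : ℝ≥0∞) * EMetric.infEdist x N ≤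
        EMetric.infEdist x (⋃ (α : Γ) (_ : α ≠ β), Ms α))
    (F : Type) [NormedAddCommGroup F] [NormedSpace ℝ F] [CompleteSpace F]
    (δ : ↥(N ∪ ⋃ α, Ms α) → F)
    (hF : IsRelLipFreeSpace (↥(N ∪ ⋃ α, Ms α))
      {x : ↥(N ∪ ⋃ α, Ms α) | (x : M) ∈ N} F δ)
    (G : Γ → Type) [∀ α, NormedAddCommGroup (G α)] [∀ α, NormedSpace ℝ (G α)]
    [∀ α, CompleteSpace (G α)]
    (δG : ∀ α : Γ, ↥(N ∪ Ms α) → G α)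
    (hG : ∀ α : Γ, IsRelLipFreeSpace (↥(N ∪ Ms α))
      {x : ↥(N ∪ Ms α) | (x : M) ∈ N} (G α) (δG α)) :
    Nonempty (F ≃L[ℝ] lp G 1) := by
  classical
  have hdisj' : Pairwise (Disjoint on Ms) := fun α β ↦ hdisj α β
  have hsub (α : Γ) : N ∪ Ms α ⊆ N ∪ ⋃ β, Ms β := union_subset_union_right N (subset_iUnion Ms α)
  choose T hT hTδ using fun α ↦ (hG α).extend F 1 (δ ∘ inclusion (hsub α))
    (by simpa using hF.lipschitz.comp ((LipschitzWith.subtype_val _).subtype_mk _))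
    (fun y hy ↦ hF.vanish _ hy)
  have hδG0 (α : Γ) (y : ↥(N ∪ Ms α)) (hy : (y : M) ∈ N) : δG α y = 0 := (hG α).vanish y hy
  refine hF.nonempty_continuousLinearEquiv
    (lipschitzOnWith_lpGlue hK hsep hdisj' (fun α ↦ (hG α).lipschitz) hδG0).to_restrict
    (fun x hx ↦ lpGlue_eq_zero_of_mem hδG0 hx)
    (topologicalClosure_span_range_lpGlue hdisj' hδG0 fun α ↦ (hG α).dense_span)
    (lp.tsumMap T 1 hT) ?_
  rintro ⟨x, hx | hx⟩
  · simp [lpGlue_eq_zero_of_mem hδG0 hx, hF.vanish ⟨x, Or.inl hx⟩ hx]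
  · obtain ⟨α, hα⟩ := mem_iUnion.1 hx
    rw [domRestrict_apply, lpGlue_of_mem hdisj' hα]
    exact (lp.tsumMap_single T 1 hT α _).trans (hTδ α _)

/-- If the pairwise disjoint sets `Ms α ⊆ M` satisfy
`d(x, ⋃_{α ≠ β} Ms α) ≥ K · d(x, N)` for every `β` and `x ∈ Ms β`, then
`𝓕_N(N ∪ ⋃_α Ms α) ≅ (⊕_α 𝓕_N(N ∪ Ms α))_{ℓ₁(Γ)}`. -/
theorem stmt_1 (M : Type*) [MetricSpace M] (base : M)
    (Γ : Type) (Ms : Γ → Set M) (N : Set M) (hbase : base ∈ N)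
    (hdisj : ∀ α β : Γ, α ≠ β → Disjoint (Ms α) (Ms β))
    (hNdisj : N ⊆ (⋃ α, Ms α)ᶜ)
    (K : ℝ≥0) (hK : 0 < K)
    (hsep : ∀ β : Γ, ∀ x ∈ Ms β,
      (K : ℝ≥0∞) * EMetric.infEdist x N ≤
        EMetric.infEdist x (⋃ (α : Γ) (_ : α ≠ β), Ms α))
    (F : Type) [NormedAddCommGroup F] [NormedSpace ℝ F] [CompleteSpace F]
    (δ : ↥(N ∪ ⋃ α, Ms α) → F)
    (hF : IsRelLipFreeSpace (↥(N ∪ ⋃ α, Ms α))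
      {x : ↥(N ∪ ⋃ α, Ms α) | (x : M) ∈ N} F δ)
    (G : Γ → Type) [∀ α, NormedAddCommGroup (G α)] [∀ α, NormedSpace ℝ (G α)]
    [∀ α, CompleteSpace (G α)]
    (δG : ∀ α : Γ, ↥(N ∪ Ms α) → G α)
    (hG : ∀ α : Γ, IsRelLipFreeSpace (↥(N ∪ Ms α))
      {x : ↥(N ∪ Ms α) | (x : M) ∈ N} (G α) (δG α)) :
    Nonempty (F ≃L[ℝ] lp G 1) :=
  stmt_1_general M Γ Ms N hdisj K hK hsep F δ hF G δG hG
end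

section
/- For every infinite metric space M with density character Γ, the space Lip_0(M) contains a subspace linearly isomorphic to c_0(Γ): there exists a family {f_α}_{α∈Γ} of 1-Lipschitz functions in Lip_0(M) which is equivalent to the unit vector basis of c_0(Γ). -/
open scoped NNReal ENNReal

/-!
Let `κ` be the density character of `M`. The heart of the proof is a family of `κ` points `x i`
with radii `r i > 0` such that `r i + r j ≤ dist (x i) (x j)`. Fix maximal `2⁻ⁿ`-separated sets
`Dₙ`; their union is dense. If some `Dₙ` has cardinality at least `κ`, it is such a family. If
`κ = ℵ₀`, take a sequence converging fast to an accumulation point, or, if there is none, any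
sequence of isolated points. Otherwise `κ` is the supremum of the strictly increasing
cardinalities of a subsequence of levels. A point of a later level is within half the separation
of an earlier level of at most one of its points, so by pigeonhole each level has a large subset
whose conflicts with all earlier levels are finitely many points; deleting the countably many
conflict points leaves points of different levels far apart.

Each `x i` then gets a witness `y i ≠ x i`, nearly a nearest neighbour, such that the ball of
radius `s i = dist (x i) (y i) / 2` around `x i` lies in the ball of radius `r i`. These balls are
disjoint, and a maximality argument keeps `κ` indices no witness of which lies in the ball of
another. The tents `max (s i - dist · (x i)) 0`, normalised at the base point, have disjoint
supports, whence `‖∑ aᵢ fᵢ‖ ≤ 2 max |aᵢ|`; comparing the values at `x i` and `y i` gives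
`max |aᵢ| ≤ 2 ‖∑ aᵢ fᵢ‖`.
-/

open Cardinal Metric Set

theorem exists_maximal_pairwise {α : Type*} (r : α → α → Prop) :
    ∃ s : Set α, Maximal (fun s : Set α => s.Pairwise r) s :=
  zorn_subset {s | s.Pairwise r} fun c hcS hc =>
    ⟨⋃₀ c, hc.pairwise_sUnion.2 hcS, fun _ => subset_sUnion_of_mem⟩

theorem exists_mk_eq_pairwise_apply_ne {ι : Type u} [Infinite ι] (h : ι → ι) :
    ∃ A : Set ι, #A = #ι ∧ A.Pairwise fun i j => h j ≠ i := by
  obtain ⟨m, hm⟩ := exists_maximal_pairwise fun i j : ι => h j ≠ i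
  by_cases hmι : #m = #ι
  · exact ⟨m, hmι, hm.prop⟩
  have hlt : #m < #ι := (mk_set_le m).lt_of_ne hmι
  have hcover : ∀ i, i ∉ m → i ∉ h '' m → h i ∈ m := by
    intro i him hih
    by_contra hi
    refine him (hm.mem_of_prop_insert (pairwise_insert.2 ⟨hm.prop, fun j hj _ => ⟨?_, ?_⟩⟩))
    · exact fun hji => hih ⟨j, hj, hji⟩
    · exact fun hij => hi (hij ▸ hj)
  have hsmall : #(m ∪ h '' m : Set ι) < #ι :=
    calc #(m ∪ h '' m : Set ι) ≤ #m + #m := (mk_union_le _ _).trans (add_le_add_right mk_image_le _)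
      _ < #ι := add_lt_of_lt (aleph0_le_mk ι) hlt hlt
  refine ⟨(m ∪ h '' m)ᶜ, mk_compl_of_infinite _ hsmall, fun i hi j hj _ hji => ?_⟩
  have hjm : h j ∈ m := hcover j (fun h' => hj (Or.inl h')) fun h' => hj (Or.inr h')
  exact hi (Or.inl (hji ▸ hjm))

theorem mk_iUnion_nat_le {α : Type u} {f : ℕ → Set α} {a : Cardinal.{u}} (ha : ℵ₀ ≤ a)
    (hf : ∀ n, #(f n) ≤ a) : #(⋃ n, f n) ≤ a := by
  have hle := mk_iUnion_le_lift f
  simp only [mk_nat, lift_aleph0, lift_uzero] at hle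
  calc #(⋃ n, f n) ≤ ℵ₀ * ⨆ n, #(f n) := hle
    _ ≤ a * a := mul_le_mul' ha (ciSup_le' hf)
    _ = a := mul_eq_self ha

theorem lt_mk_diff_of_countable {α : Type u} {T C : Set α} {ν : Cardinal.{u}} (hν : ℵ₀ ≤ ν)
    (hT : ν < #T) (hC : C.Countable) : ν < #(T \ C : Set α) := by
  by_contra! hle
  have : #T ≤ ν :=
    calc #T ≤ #(T \ C ∪ C : Set α) := mk_le_mk_of_subset (by simp)
      _ ≤ #(T \ C : Set α) + #C := mk_union_le _ _
      _ ≤ ν + ν := add_le_add hle (hC.le_aleph0.trans hν)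
      _ = ν := add_eq_self hν
  exact this.not_gt hT

theorem exists_strictMono_subseq {c : ℕ → Cardinal} {κ : Cardinal} (hκ : ℵ₀ < κ)
    (hlt : ∀ n, c n < κ) (hcof : ∀ a < κ, ∃ n, a < c n) :
    ∃ g : ℕ → ℕ, StrictMono g ∧ ℵ₀ ≤ c (g 0) ∧ StrictMono (c ∘ g) ∧
      ∀ a < κ, ∃ k, a < c (g k) := by
  have hnext : ∀ n, ∃ m, ℵ₀ < c m ∧ ∀ k ≤ n, c k < c m := by
    intro n
    have hsup : ℵ₀ ⊔ (Finset.range (n + 1)).sup c < κ :=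
      sup_lt_iff.2 ⟨hκ, (Finset.sup_lt_iff (hκ.trans_le' bot_le)).2 fun k _ => hlt k⟩
    obtain ⟨m, hm⟩ := hcof _ hsup
    refine ⟨m, lt_of_le_of_lt le_sup_left hm, fun k hk => lt_of_le_of_lt ?_ hm⟩
    exact (Finset.le_sup (Finset.mem_range_succ_iff.2 hk)).trans le_sup_right
  choose next hnext₀ hnext using hnext
  let g : ℕ → ℕ := fun k => Nat.rec (next 0) (fun _ m => next m) k
  have hcg : ∀ k, c (g k) < c (g (k + 1)) := fun k => hnext (g k) (g k) le_rfl
  have hg : StrictMono g := strictMono_nat_of_lt_succ fun k => by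
    by_contra! hle
    exact (hnext (g k) (g (k + 1)) hle).false
  refine ⟨g, hg, (hnext₀ 0).le, strictMono_nat_of_lt_succ hcg, fun a ha => ?_⟩
  obtain ⟨n, hn⟩ := hcof a ha
  exact ⟨n + 1, hn.trans (hnext (g n) n (hg.id_le n))⟩

section DensityCharacter

variable {X : Type u} [TopologicalSpace X]

theorem densityCharacter_le_mk {D : Set X} (hD : Dense D) :
    densityCharacter X ≤ #D :=
  ciInf_le' _ (⟨D, hD⟩ : {s : Set X // Dense s})

theorem aleph0_le_densityCharacter [T1Space X] [Infinite X] :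
    ℵ₀ ≤ densityCharacter X := by
  have : Nonempty {s : Set X // Dense s} := ⟨⟨univ, dense_univ⟩⟩
  refine le_ciInf fun s => ?_
  rw [aleph0_le_mk_iff, infinite_coe_iff]
  intro hfin
  have : s.1 = Set.univ := hfin.isClosed.closure_eq.symm.trans s.2.closure_eq
  exact infinite_univ (this ▸ hfin)

theorem exists_lt_mk_of_dense_iUnion {D : ℕ → Set X}
    (hD : Dense (⋃ n, D n)) {a : Cardinal.{u}} (ha : ℵ₀ ≤ a) (haκ : a < densityCharacter X) :
    ∃ n, a < #(D n) := by
  by_contra! hle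
  exact ((densityCharacter_le_mk hD).trans (mk_iUnion_nat_le ha hle)).not_gt haκ

end DensityCharacter

section PseudoMetricSpace

variable {X : Type u} [PseudoMetricSpace X]

theorem exists_pairwise_le_dist_forall_exists_dist_lt {ε : ℝ} (hε : 0 < ε) :
    ∃ D : Set X, D.Pairwise (fun x y => ε ≤ dist x y) ∧ ∀ z, ∃ x ∈ D, dist z x < ε := by
  obtain ⟨D, hD⟩ := exists_maximal_pairwise fun x y : X => ε ≤ dist x y
  refine ⟨D, hD.prop, fun z => ?_⟩
  by_cases hz : z ∈ D
  · exact ⟨z, hz, by simpa using hε⟩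
  by_contra! hfar
  refine hz (hD.mem_of_prop_insert (pairwise_insert.2 ⟨hD.prop, fun x hx _ => ?_⟩))
  exact ⟨hfar x hx, dist_comm x z ▸ hfar x hx⟩

structure IsBallPacking {ι : Type*} (x : ι → X) (r : ι → ℝ) : Prop where
  pos : ∀ i, 0 < r i
  add_le_dist : Pairwise fun i j => r i + r j ≤ dist (x i) (x j)

theorem isBallPacking_of_pairwise_le_dist {D : Set X} {ε : ℝ} (hε : 0 < ε)
    (hD : D.Pairwise fun x y => ε ≤ dist x y) :
    IsBallPacking (Subtype.val : D → X) fun _ => ε / 2 where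
  pos _ := half_pos hε
  add_le_dist i j hij := by
    have := hD i.2 j.2 (Subtype.coe_injective.ne hij)
    linarith

theorem exists_subset_forall_dist_lt_mem_subsingleton {T L : Set X} {ν : Cardinal.{u}} {η : ℝ}
    (hν : ℵ₀ ≤ ν) (hT : ν < #T) (hL : #L ≤ ν) (hsep : L.Pairwise fun x y => η ≤ dist x y) :
    ∃ F ⊆ T, ν < #F ∧ ∃ C : Set X, C.Subsingleton ∧
      ∀ x ∈ F, ∀ z ∈ L, dist x z < η / 2 → z ∈ C := by
  classical
  let near : T → Option L := fun x =>
    if h : ∃ z ∈ L, dist (x : X) z < η / 2 then some ⟨h.choose, h.choose_spec.1⟩ else none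
  have hnear : #(Option L) < (Order.succ ν).ord.cof := by
    rw [(isRegular_succ hν).cof_ord, mk_option]
    refine lt_of_le_of_lt ?_ (Order.lt_succ ν)
    exact (add_le_add hL (one_le_aleph0.trans hν)).trans (add_eq_self hν).le
  obtain ⟨b, F, hFT, hF, hFb⟩ := infinite_pigeonhole_set near (Order.succ ν)
    (Order.succ_le_of_lt hT) (hν.trans (Order.le_succ ν)) hnear
  have huniq : ∀ x, ∀ z ∈ L, ∀ z' ∈ L, dist x z < η / 2 → dist x z' < η / 2 → z = z' := by
    intro x z hz z' hz' hxz hxz'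
    by_contra hne
    linarith [hsep hz hz' hne, dist_triangle_left z z' x]
  have hb : ∀ x ∈ F, ∀ z (hz : z ∈ L), dist x z < η / 2 → b = some ⟨z, hz⟩ := by
    intro x hx z hz hxz
    have hex : ∃ z ∈ L, dist x z < η / 2 := ⟨z, hz, hxz⟩
    rw [← hFb hx, show near ⟨x, hFT hx⟩ = _ from dif_pos hex]
    congr
    exact huniq x _ hex.choose_spec.1 z hz hex.choose_spec.2 hxz
  refine ⟨F, hFT, Order.succ_le_iff.1 hF, {z | ∃ hz : z ∈ L, b = some ⟨z, hz⟩}, ?_,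
    fun x hx z hz hxz => ⟨hz, hb x hx z hz hxz⟩⟩
  rintro z ⟨hz, hbz⟩ z' ⟨hz', hbz'⟩
  exact congrArg Subtype.val (Option.some_injective _ (hbz.symm.trans hbz'))

theorem exists_subset_forall_dist_lt_mem_finite {T : Set X} {ν : Cardinal.{u}} (hν : ℵ₀ ≤ ν)
    (hT : ν < #T) (L : ℕ → Set X) (η : ℕ → ℝ) (n : ℕ) (hL : ∀ j < n, #(L j) ≤ ν)
    (hsep : ∀ j < n, (L j).Pairwise fun x y => η j ≤ dist x y) :
    ∃ F ⊆ T, ν < #F ∧ ∃ C : Set X, C.Finite ∧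
      ∀ x ∈ F, ∀ j < n, ∀ z ∈ L j, dist x z < η j / 2 → z ∈ C := by
  induction n with
  | zero => exact ⟨T, subset_rfl, hT, ∅, finite_empty, fun _ _ j hj => absurd hj j.not_lt_zero⟩
  | succ n ih =>
    obtain ⟨F, hFT, hF, C, hC, hCF⟩ :=
      ih (fun j hj => hL j (by omega)) fun j hj => hsep j (by omega)
    obtain ⟨F', hF'F, hF', C', hC', hC'F'⟩ :=
      exists_subset_forall_dist_lt_mem_subsingleton hν hF (hL n n.lt_succ_self)
        (hsep n n.lt_succ_self)
    refine ⟨F', hF'F.trans hFT, hF', C ∪ C', hC.union hC'.finite, fun x hx j hj z hz hxz => ?_⟩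
    rcases Nat.lt_succ_iff_lt_or_eq.1 hj with hj | rfl
    · exact Or.inl (hCF x (hF'F hx) j hj z hz hxz)
    · exact Or.inr (hC'F' x hx z hz hxz)

theorem exists_isBallPacking_of_levels (L : ℕ → Set X) (η : ℕ → ℝ) (hη : ∀ k, 0 < η k)
    (hanti : Antitone η) (hsep : ∀ k, (L k).Pairwise fun x y => η k ≤ dist x y)
    (h₀ : ℵ₀ ≤ #(L 0)) (hmono : StrictMono fun k => #(L k)) :
    ∃ (ι : Type u) (x : ι → X) (r : ι → ℝ), IsBallPacking x r ∧ ∀ k, #(L k) < #ι := by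
  have hinf k : ℵ₀ ≤ #(L k) := h₀.trans (hmono.monotone (Nat.zero_le k))
  -- level `k + 1` is thinned out against the levels `≤ k`, all of cardinality `≤ #(L k)`
  choose F hFL hF C hCfin hC using fun k =>
    exists_subset_forall_dist_lt_mem_finite (hinf k) (hmono k.lt_succ_self) L η (k + 1)
      (fun j hj => hmono.monotone (Nat.lt_succ_iff.1 hj)) fun j _ => hsep j
  let S k := F k \ ⋃ m, C m
  have hS k : #(L k) < #(S k) :=
    lt_mk_diff_of_countable (hinf k) (hF k) (countable_iUnion fun m => (hCfin m).countable)
  have hfar : ∀ j k, j < k → ∀ p ∈ S j, ∀ q ∈ S k, η (j + 1) / 2 ≤ dist q p := by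
    intro j k hjk p hp q hq
    by_contra! h
    exact hp.2 (mem_iUnion.2 ⟨k, hC k q hq.1 (j + 1) (by omega) p (hFL j hp.1) h⟩)
  refine ⟨Σ k, S k, fun p => p.2, fun p => η (p.1 + 1) / 4,
    ⟨fun p => by linarith [hη (p.1 + 1)], ?_⟩,
    fun k => (hS k).trans_le (mk_le_of_injective (sigma_mk_injective (β := fun k => S k)))⟩
  rintro ⟨j, p, hp⟩ ⟨k, q, hq⟩ hne
  dsimp only
  rcases lt_trichotomy j k with hjk | rfl | hjk
  · have := hanti (Nat.succ_le_succ hjk.le)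
    linarith [hfar j k hjk p hp q hq, dist_comm p q]
  · have hpq : p ≠ q := by rintro rfl; exact hne rfl
    have : η (j + 1) ≤ dist p q := hsep (j + 1) (hFL j hp.1) (hFL j hq.1) hpq
    linarith [hη (j + 1)]
  · have := hanti (Nat.succ_le_succ hjk.le)
    linarith [hfar k j hjk q hq p hp]

theorem lipschitzWith_sub_const_iff {f : X → ℝ} {K : ℝ≥0} (c : ℝ) :
    LipschitzWith K (fun z => f z - c) ↔ LipschitzWith K f := by
  simp only [lipschitzWith_iff_dist_le_mul, dist_sub_right]

theorem lipschitzWith_sum_mul_sub_iff {ι : Type*} (g : ι → X → ℝ) (t : Finset ι) (a : ι → ℝ)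
    (z₀ : X) {K : ℝ≥0} :
    LipschitzWith K (fun z => ∑ i ∈ t, a i * (g i z - g i z₀)) ↔
      LipschitzWith K fun z => ∑ i ∈ t, a i * g i z := by
  simp only [mul_sub, Finset.sum_sub_distrib]
  exact lipschitzWith_sub_const_iff _

theorem lipschitzWith_sum_mul_of_support_subsingleton {ι : Type*} {g : ι → X → ℝ} {K : ℝ≥0}
    (hg : ∀ i, LipschitzWith K (g i)) (hsupp : ∀ z i j, g i z ≠ 0 → g j z ≠ 0 → i = j)
    (t : Finset ι) (a : ι → ℝ) :
    LipschitzWith (2 * K * t.sup fun i => ‖a i‖₊) fun z => ∑ i ∈ t, a i * g i z := by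
  classical
  refine LipschitzWith.of_dist_le_mul fun z w => ?_
  set Q := t.sup fun i => ‖a i‖₊
  have hcard (v : X) : (t.filter fun i => g i v ≠ 0).card ≤ 1 :=
    Finset.card_le_one.2 fun i hi j hj => hsupp v i j (Finset.mem_filter.1 hi).2
      (Finset.mem_filter.1 hj).2
  set T := (t.filter fun i => g i z ≠ 0) ∪ t.filter fun i => g i w ≠ 0
  have hTt : T ⊆ t := Finset.union_subset (Finset.filter_subset _ _) (Finset.filter_subset _ _)
  have hsum : (∑ i ∈ t, a i * g i z) - ∑ i ∈ t, a i * g i w =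
      ∑ i ∈ T, (a i * g i z - a i * g i w) := by
    rw [← Finset.sum_sub_distrib]
    refine (Finset.sum_subset hTt fun i hi hiT => ?_).symm
    simp only [T, Finset.mem_union, Finset.mem_filter, not_or, not_and, not_not] at hiT
    rw [(hiT.1 hi), (hiT.2 hi), sub_self]
  have hterm : ∀ i ∈ T, |a i * g i z - a i * g i w| ≤ Q * (K * dist z w) := by
    intro i hi
    rw [← mul_sub, abs_mul]
    refine mul_le_mul ?_ ((Real.dist_eq _ _).symm.le.trans ((hg i).dist_le_mul z w))
      (abs_nonneg _) Q.coe_nonneg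
    exact_mod_cast (Finset.le_sup (f := fun i => ‖a i‖₊) (hTt hi))
  have hTcard : (T.card : ℝ) ≤ 2 := by
    exact_mod_cast (Finset.card_union_le _ _).trans (add_le_add (hcard z) (hcard w))
  rw [Real.dist_eq, hsum]
  calc |∑ i ∈ T, (a i * g i z - a i * g i w)|
      ≤ ∑ i ∈ T, |a i * g i z - a i * g i w| := Finset.abs_sum_le_sum_abs _ _
    _ ≤ T.card * (Q * (K * dist z w)) := by
      simpa using Finset.sum_le_sum hterm
    _ ≤ 2 * (Q * (K * dist z w)) := by gcongr
    _ = (2 * K * Q : ℝ≥0) * dist z w := by push_cast; ring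

theorem abs_mul_abs_le_of_lipschitzWith_sum_mul {ι : Type*} {g : ι → X → ℝ} {t : Finset ι}
    {a : ι → ℝ} {L : ℝ≥0} (hL : LipschitzWith L fun z => ∑ j ∈ t, a j * g j z) {i : ι}
    (hi : i ∈ t) {p q : X} (hp : ∀ j ∈ t, j ≠ i → g j p = 0) (hq : ∀ j ∈ t, g j q = 0) :
    |a i| * |g i p| ≤ L * dist p q := by
  have h := hL.dist_le_mul p q
  rwa [Finset.sum_eq_single_of_mem i hi fun j hj hji => by rw [hp j hj hji, mul_zero],
    Finset.sum_eq_zero fun j hj => by rw [hq j hj, mul_zero], Real.dist_eq, sub_zero,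
    abs_mul] at h

def tent (x : X) (s : ℝ) (z : X) : ℝ := max (s - dist z x) 0

theorem tent_lipschitzWith (x : X) (s : ℝ) : LipschitzWith 1 (tent x s) := by
  have hsub : LipschitzWith 1 fun z => s - dist z x := lipschitzWith_iff_dist_le_mul.2
    fun z w => by rw [dist_sub_left]; exact (LipschitzWith.dist_left x).dist_le_mul z w
  exact hsub.max_const 0

theorem tent_ne_zero_iff {x z : X} {s : ℝ} : tent x s z ≠ 0 ↔ z ∈ ball x s := by
  simp [tent, mem_ball]

theorem tent_self (x : X) {s : ℝ} (hs : 0 ≤ s) : tent x s x = s := by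
  simp [tent, hs]

/-- Peaks `x i`, supports `ball (x i) (s i)` and common zeros `y i` of a family of tents. -/
structure IsTentFamily {ι : Type*} (x y : ι → X) (s : ι → ℝ) : Prop where
  pos : ∀ i, 0 < s i
  dist_eq : ∀ i, dist (x i) (y i) = 2 * s i
  pairwise_disjoint : Pairwise fun i j => Disjoint (ball (x i) (s i)) (ball (x j) (s j))
  notMem_ball : ∀ i j, y i ∉ ball (x j) (s j)

namespace IsTentFamily

variable {ι : Type*} {x y : ι → X} {s : ι → ℝ}

theorem comp {ι' : Type*} (hT : IsTentFamily x y s) {e : ι' → ι} (he : Function.Injective e) :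
    IsTentFamily (x ∘ e) (y ∘ e) (s ∘ e) where
  pos i := hT.pos (e i)
  dist_eq i := hT.dist_eq (e i)
  pairwise_disjoint _ _ hij := hT.pairwise_disjoint (he.ne hij)
  notMem_ball i j := hT.notMem_ball (e i) (e j)

theorem lipschitzWith_sum_mul (hT : IsTentFamily x y s) (t : Finset ι) (a : ι → ℝ) :
    LipschitzWith (2 * t.sup fun i => ‖a i‖₊) fun z => ∑ i ∈ t, a i * tent (x i) (s i) z := by
  simpa using lipschitzWith_sum_mul_of_support_subsingleton (fun i => tent_lipschitzWith _ _)
    (fun z i j hi hj => by_contra fun hij => (hT.pairwise_disjoint hij).ne_of_mem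
      (tent_ne_zero_iff.1 hi) (tent_ne_zero_iff.1 hj) rfl) t a

theorem abs_le_of_lipschitzWith_sum_mul (hT : IsTentFamily x y s) {t : Finset ι} {a : ι → ℝ}
    {L : ℝ≥0} (hL : LipschitzWith L fun z => ∑ i ∈ t, a i * tent (x i) (s i) z) {i : ι}
    (hi : i ∈ t) : |a i| ≤ 2 * L := by
  have hsi := hT.pos i
  have h := abs_mul_abs_le_of_lipschitzWith_sum_mul hL hi (p := x i) (q := y i)
    (fun j _ hji => by_contra fun h => (hT.pairwise_disjoint hji).ne_of_mem
      (tent_ne_zero_iff.1 h) (mem_ball_self hsi) rfl)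
    fun j _ => not_not.1 fun h => hT.notMem_ball i j (tent_ne_zero_iff.1 h)
  rw [tent_self _ hsi.le, abs_of_pos hsi, hT.dist_eq] at h
  nlinarith

end IsTentFamily

theorem exists_ne_ball_subset_ball [Nontrivial X] (x : X) {r : ℝ} (hr : 0 < r) :
    ∃ y ≠ x, ball x (dist x y / 2) ⊆ ball x r := by
  obtain ⟨y, hy, hxy⟩ := (infDist_lt_iff (exists_ne x)).1
    (lt_add_of_pos_right (infDist x {x}ᶜ) hr)
  refine ⟨y, hy, fun z hz => ?_⟩
  rw [mem_ball] at hz ⊢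
  by_cases hzx : z = x
  · simpa [hzx] using hr
  · have := infDist_le_dist_of_mem (x := x) (mem_compl_singleton_iff.2 hzx)
    rw [dist_comm] at this
    linarith

end PseudoMetricSpace

section MetricSpace

variable {X : Type u} [MetricSpace X]

theorem isBallPacking_of_dist_succ_le_half {p : X} {u : ℕ → X} (hu : ∀ n, u n ≠ p)
    (hhalf : ∀ n, dist (u (n + 1)) p ≤ dist (u n) p / 2) :
    IsBallPacking u fun n => dist (u n) p / 4 := by
  have hpos n : 0 < dist (u n) p := dist_pos.2 (hu n)
  have hanti : Antitone fun n => dist (u n) p :=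
    antitone_nat_of_succ_le fun n => (hhalf n).trans (by linarith [hpos n])
  have hfar : ∀ m n, m < n → dist (u m) p / 4 + dist (u n) p / 4 ≤ dist (u m) (u n) := by
    intro m n hmn
    have hn : dist (u n) p ≤ dist (u m) p / 2 := (hanti hmn).trans (hhalf m)
    linarith [dist_triangle (u m) (u n) p, hpos n]
  refine ⟨fun n => by linarith [hpos n], fun m n hmn => ?_⟩
  rcases hmn.lt_or_gt with h | h
  · exact hfar m n h
  · rw [dist_comm (u m) (u n), add_comm]
    exact hfar n m h

theorem exists_isBallPacking_nat [Infinite X] :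
    ∃ (x : ℕ → X) (r : ℕ → ℝ), IsBallPacking x r := by
  by_cases hacc : ∃ p : X, ∀ ε > 0, ∃ v, v ≠ p ∧ dist v p < ε
  · obtain ⟨p, hp⟩ := hacc
    choose next hnext_ne hnext_lt using fun v : {v // v ≠ p} =>
      hp (dist (v : X) p / 2) (half_pos (dist_pos.2 v.2))
    obtain ⟨v₀, hv₀⟩ := exists_ne p
    let w : ℕ → {v // v ≠ p} := fun n => Nat.rec ⟨v₀, hv₀⟩ (fun _ v => ⟨next v, hnext_ne v⟩) n
    refine ⟨fun n => (w n).1, fun n => dist (w n).1 p / 4, ?_⟩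
    exact isBallPacking_of_dist_succ_le_half (fun n => (w n).2) fun n => (hnext_lt (w n)).le
  · push Not at hacc
    choose R hRpos hR using hacc
    let e := Infinite.natEmbedding X
    refine ⟨e, fun n => R (e n) / 2, ⟨fun n => half_pos (hRpos _), fun m n hmn => ?_⟩⟩
    have hm := hR (e m) (e n) (e.injective.ne hmn.symm)
    have hn := hR (e n) (e m) (e.injective.ne hmn)
    rw [dist_comm] at hm
    linarith

theorem exists_isBallPacking_densityCharacter_le [Infinite X] :
    ∃ (ι : Type u) (x : ι → X) (r : ι → ℝ), IsBallPacking x r ∧ densityCharacter X ≤ #ι := by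
  have hpow n : (0 : ℝ) < (1 / 2) ^ n := by positivity
  choose D hDsep hDnet using fun n =>
    exists_pairwise_le_dist_forall_exists_dist_lt (X := X) (hpow n)
  have hdense : Dense (⋃ n, D n) := by
    refine Metric.dense_iff.2 fun z ε hε => ?_
    obtain ⟨n, hn⟩ := exists_pow_lt_of_lt_one hε (by norm_num : (1 / 2 : ℝ) < 1)
    obtain ⟨x, hx, hzx⟩ := hDnet n z
    exact ⟨x, mem_ball'.2 (hzx.trans hn), mem_iUnion.2 ⟨n, hx⟩⟩
  by_cases hbig : ∃ n, densityCharacter X ≤ #(D n)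
  · obtain ⟨n, hn⟩ := hbig
    exact ⟨D n, _, _, isBallPacking_of_pairwise_le_dist (hpow n) (hDsep n), hn⟩
  push Not at hbig
  rcases le_or_gt (densityCharacter X) ℵ₀ with hκ | hκ
  · obtain ⟨x, r, hxr⟩ := exists_isBallPacking_nat (X := X)
    exact ⟨ULift ℕ, x ∘ ULift.down, r ∘ ULift.down,
      ⟨fun n => hxr.pos _, fun m n hmn => hxr.add_le_dist (ULift.down_injective.ne hmn)⟩,
      by simpa using hκ⟩
  have hcof : ∀ a < densityCharacter X, ∃ n, a < #(D n) := fun a ha =>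
    (exists_lt_mk_of_dense_iUnion hdense le_sup_right (max_lt ha hκ)).imp fun _ =>
      lt_of_le_of_lt le_sup_left
  obtain ⟨g, hg, hg₀, hcg, hgcof⟩ := exists_strictMono_subseq hκ hbig hcof
  obtain ⟨ι, x, r, hxr, hι⟩ := exists_isBallPacking_of_levels (fun k => D (g k))
    (fun k => (1 / 2) ^ g k) (fun k => hpow _)
    ((pow_right_anti₀ (by norm_num) (by norm_num)).comp_monotone hg.monotone)
    (fun k => hDsep _) hg₀ hcg
  refine ⟨ι, x, r, hxr, le_of_forall_lt fun a ha => ?_⟩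
  obtain ⟨k, hk⟩ := hgcof a ha
  exact hk.trans (hι k)

theorem IsBallPacking.exists_isTentFamily [Nontrivial X] {ι : Type u} [Infinite ι]
    {x : ι → X} {r : ι → ℝ} (hxr : IsBallPacking x r) :
    ∃ (A : Set ι) (y : A → X) (s : A → ℝ), #A = #ι ∧ IsTentFamily (fun i : A => x i) y s := by
  choose y hyx hball using fun i => exists_ne_ball_subset_ball (x i) (hxr.pos i)
  let s i := dist (x i) (y i) / 2
  have hdisj : Pairwise fun i j => Disjoint (ball (x i) (s i)) (ball (x j) (s j)) :=
    fun i j hij => (ball_disjoint_ball (hxr.add_le_dist hij)).mono (hball i) (hball j)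
  -- `h j` is the centre of the ball containing `y j`, if there is one
  have hcentre : ∀ j, ∃ i, ∀ i', y j ∈ ball (x i') (s i') → i' = i := by
    intro j
    by_cases hj : ∃ i, y j ∈ ball (x i) (s i)
    · obtain ⟨i, hi⟩ := hj
      exact ⟨i, fun i' hi' => by_contra fun hne => (hdisj hne).ne_of_mem hi' hi rfl⟩
    · push Not at hj
      exact ⟨j, fun i' hi' => absurd hi' (hj i')⟩
  choose h hh using hcentre
  obtain ⟨A, hA, hAh⟩ := exists_mk_eq_pairwise_apply_ne h
  refine ⟨A, fun i => y i, fun i => s i, hA, fun i => half_pos (dist_pos.2 (hyx i).symm),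
    fun i => (mul_div_cancel₀ _ two_ne_zero).symm,
    fun i j hij => hdisj (Subtype.coe_injective.ne hij), fun i j hj => ?_⟩
  rcases eq_or_ne i j with rfl | hij
  · have hlt : dist (x i) (y i) < dist (x i) (y i) / 2 := by rwa [mem_ball, dist_comm] at hj
    linarith [dist_nonneg (x := x i) (y := y i)]
  · exact hAh j.2 i.2 (Subtype.coe_injective.ne hij.symm) (hh i j hj).symm

theorem exists_isTentFamily [Infinite X] {Γ : Type u} (hΓ : #Γ ≤ densityCharacter X) :
    ∃ (x y : Γ → X) (s : Γ → ℝ), IsTentFamily x y s := by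
  obtain ⟨ι, x, r, hxr, hι⟩ := exists_isBallPacking_densityCharacter_le (X := X)
  have : Infinite ι := infinite_iff.2 (aleph0_le_densityCharacter.trans hι)
  obtain ⟨A, y, s, hA, hT⟩ := hxr.exists_isTentFamily
  obtain ⟨e⟩ := (le_def Γ A).1 (hΓ.trans (hι.trans hA.ge))
  exact ⟨_, _, _, hT.comp e.injective⟩

end MetricSpace

/-- For every infinite metric space `M` with density character `Γ`,
`Lip₀(M)` contains a family of `1`-Lipschitz functions (vanishing at the base point)
which is equivalent to the unit vector basis of `c₀(Γ)`: the Lip₀-norm (i.e. the best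
Lipschitz constant) of every finite linear combination is, up to constants `c, C`,
the supremum of the absolute values of the coefficients. -/
theorem stmt_3 (M : Type u) [MetricSpace M] [Infinite M] (base : M)
    (Γ : Type u) (hΓ : Cardinal.mk Γ = densityCharacter M) :
    ∃ f : Γ → M → ℝ,
      (∀ α : Γ, LipschitzWith 1 (f α) ∧ f α base = 0) ∧
      ∃ c C : ℝ≥0, 0 < c ∧
        (∀ a : Γ →₀ ℝ,
          LipschitzWith (C * a.support.sup fun α => ‖a α‖₊)
            (fun x => ∑ α ∈ a.support, a α * f α x)) ∧
        (∀ (a : Γ →₀ ℝ) (L : ℝ≥0),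
          LipschitzWith L (fun x => ∑ α ∈ a.support, a α * f α x) →
          c * (a.support.sup fun α => ‖a α‖₊) ≤ L) := by
  obtain ⟨x, y, s, hT⟩ := exists_isTentFamily (X := M) hΓ.le
  let g γ := tent (x γ) (s γ)
  refine ⟨fun γ z => g γ z - g γ base,
    fun γ => ⟨(lipschitzWith_sub_const_iff _).2 (tent_lipschitzWith _ _), sub_self _⟩,
    1 / 2, 2, by norm_num, fun a => ?_, fun a L hL => ?_⟩
  · exact (lipschitzWith_sum_mul_sub_iff g _ _ base).2 (hT.lipschitzWith_sum_mul _ _)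
  · rw [lipschitzWith_sum_mul_sub_iff g] at hL
    have hsup : (a.support.sup fun α => ‖a α‖₊) ≤ 2 * L := Finset.sup_le fun α hα => by
      rw [← NNReal.coe_le_coe, coe_nnnorm, Real.norm_eq_abs]
      exact_mod_cast hT.abs_le_of_lipschitzWith_sum_mul hL hα
    calc 1 / 2 * (a.support.sup fun α => ‖a α‖₊) ≤ 1 / 2 * (2 * L) := by gcongr
      _ = L := by ring
end

section
/- The map R defined on the closed first quadrant of the complex plane by R(z) = z²/|z| for z ≠ 0 and R(0) = 0 is a bi-Lipschitz bijection from the closed first quadrant {z ∈ ℂ : Re z ≥ 0, Im z ≥ 0} onto the closed upper half-plane {z ∈ ℂ : Im z ≥ 0}; more precisely, |R(z₀) − R(z₁)| ≤ 3|z₀ − z₁| for all z₀, z₁ in the closed first quadrant, and |R⁻¹(z₀) − R⁻¹(z₁)| ≤ 2|z₀ − z₁| for all z₀, z₁ in the closed upper half-plane. -/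
/-- The map `R(z) = z²/|z|` (with `R(0) = 0`, which holds automatically since
division by zero is zero). -/
noncomputable def Rmap (z : ℂ) : ℂ := z ^ 2 / ((‖z‖ : ℝ) : ℂ)

/-- The closed first quadrant of the complex plane. -/
def firstQuadrant : Set ℂ := {z : ℂ | 0 ≤ z.re ∧ 0 ≤ z.im}

/-- The closed upper half-plane. -/
def upperHalfPlane' : Set ℂ := {z : ℂ | 0 ≤ z.im}

/-! With `u = z / |z|` we have `z = |z| u` and `R(z) = z u = |z| u²`.

For the upper bound, `z₀ u₀ - z₁ u₁ = (z₀ - z₁)(u₀ + u₁) - (|z₀| - |z₁|) u₀ u₁`, and each term is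
controlled by `|z₀ - z₁|`.

For the lower bound, put `a = |z₀|`, `b = |z₁|` and `c = cos θ`, where `θ ∈ [0, π/2]` is the angle
between `z₀` and `z₁`. Then `|z₀ - z₁|² = a² + b² - 2abc` and
`|R z₀ - R z₁|² = a² + b² - 2ab(2c² - 1)`, so
`4|R z₀ - R z₁|² - |z₀ - z₁|² = 3(a - b)² + 2ab(1 - c)(7 + 8c) ≥ 0`.

Surjectivity: `|w| e^{i arg(w)/2}` lies in the first quadrant when `arg w ∈ [0, π]`. -/

open Complex ComplexConjugate

lemma Rmap_ofReal_mul {r : ℝ} (hr : 0 ≤ r) {u : ℂ} (hu : ‖u‖ = 1) :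
    Rmap (r * u) = r * u ^ 2 := by
  rcases hr.eq_or_lt with rfl | hr
  · simp [Rmap]
  · have : (r : ℂ) ≠ 0 := ofReal_ne_zero.mpr hr.ne'
    rw [Rmap, norm_mul, norm_real, Real.norm_of_nonneg hr.le, hu, mul_one]
    field_simp

lemma Rmap_eq_mul_div_norm (z : ℂ) : Rmap z = z * (z / ‖z‖) := by
  rw [Rmap, mul_div_assoc', sq]

lemma ofReal_norm_mul_div_norm (z : ℂ) : (‖z‖ : ℂ) * (z / ‖z‖) = z :=
  mul_div_cancel_of_imp' fun h => norm_eq_zero.mp (ofReal_eq_zero.mp h)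

lemma norm_div_norm_le_one (z : ℂ) : ‖z / ‖z‖‖ ≤ 1 := by
  rcases eq_or_ne z 0 with rfl | hz
  · simp
  · rw [norm_div, norm_real, Real.norm_of_nonneg (norm_nonneg z),
      div_self (norm_ne_zero_iff.mpr hz)]

lemma Rmap_lipschitzWith : LipschitzWith 3 Rmap := by
  refine LipschitzWith.of_dist_le_mul fun z₀ z₁ => ?_
  simp only [dist_eq_norm, NNReal.coe_ofNat]
  -- thanks to `0 / 0 = 0`, `z = |z| (z / |z|)` also holds at `z = 0`, so no case split is needed
  set u := z₀ / ‖z₀‖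
  set v := z₁ / ‖z₁‖
  have hz₀ : z₀ = ‖z₀‖ * u := (ofReal_norm_mul_div_norm z₀).symm
  have hz₁ : z₁ = ‖z₁‖ * v := (ofReal_norm_mul_div_norm z₁).symm
  have hR₀ : Rmap z₀ = z₀ * u := Rmap_eq_mul_div_norm z₀
  have hR₁ : Rmap z₁ = z₁ * v := Rmap_eq_mul_div_norm z₁
  have hu : ‖u‖ ≤ 1 := norm_div_norm_le_one z₀
  have hv : ‖v‖ ≤ 1 := norm_div_norm_le_one z₁
  clear_value u v
  have key : Rmap z₀ - Rmap z₁ = (z₀ - z₁) * (u + v) - ((‖z₀‖ - ‖z₁‖ : ℝ) : ℂ) * (u * v) := by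
    rw [hR₀, hR₁]
    push_cast
    linear_combination u * hz₁ - v * hz₀
  calc ‖Rmap z₀ - Rmap z₁‖
      ≤ ‖z₀ - z₁‖ * (‖u‖ + ‖v‖) + |‖z₀‖ - ‖z₁‖| * (‖u‖ * ‖v‖) := by
        rw [key]
        refine (norm_sub_le _ _).trans ?_
        rw [norm_mul, norm_mul, norm_mul, norm_real, Real.norm_eq_abs]
        gcongr
        exact norm_add_le u v
    _ ≤ ‖z₀ - z₁‖ * (1 + 1) + ‖z₀ - z₁‖ * (1 * 1) := by
        gcongr
        exact abs_norm_sub_norm_le z₀ z₁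
    _ = 3 * ‖z₀ - z₁‖ := by ring

lemma exists_norm_eq_one_mem_firstQuadrant {z : ℂ} (hz : z ∈ firstQuadrant) :
    ∃ u ∈ firstQuadrant, ‖u‖ = 1 ∧ z = ‖z‖ * u := by
  rcases eq_or_ne z 0 with rfl | hz0
  · exact ⟨1, ⟨zero_le_one, le_rfl⟩, norm_one, by simp⟩
  · have hnorm : 0 < ‖z‖ := norm_pos_iff.mpr hz0
    refine ⟨z / ‖z‖, ⟨?_, ?_⟩, ?_, (mul_div_cancel₀ z (by exact_mod_cast hnorm.ne')).symm⟩
    · rw [div_ofReal_re]; exact div_nonneg hz.1 hnorm.le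
    · rw [div_ofReal_im]; exact div_nonneg hz.2 hnorm.le
    · rw [norm_div, norm_real, Real.norm_of_nonneg hnorm.le, div_self hnorm.ne']

lemma norm_ofReal_mul_sub_ofReal_mul_sq (a b : ℝ) {u v : ℂ} (hu : ‖u‖ = 1) (hv : ‖v‖ = 1) :
    ‖(a : ℂ) * u - b * v‖ ^ 2 = a ^ 2 + b ^ 2 - 2 * a * b * (u * conj v).re := by
  have hconj : (a : ℂ) * u * conj ((b : ℂ) * v) = ((a * b : ℝ) : ℂ) * (u * conj v) := by
    rw [map_mul, conj_ofReal]; push_cast; ring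
  rw [Complex.sq_norm, normSq_sub, ← Complex.sq_norm, ← Complex.sq_norm, norm_mul, norm_mul,
    hu, hv, norm_real, norm_real, Real.norm_eq_abs, Real.norm_eq_abs, hconj, re_ofReal_mul]
  simp only [mul_one, sq_abs]
  ring

lemma norm_ofReal_mul_sub_le_two_mul_norm_sq_sub {a b : ℝ} (ha : 0 ≤ a) (hb : 0 ≤ b) {u v : ℂ}
    (hu : u ∈ firstQuadrant) (hv : v ∈ firstQuadrant) (hu1 : ‖u‖ = 1) (hv1 : ‖v‖ = 1) :
    ‖(a : ℂ) * u - b * v‖ ≤ 2 * ‖(a : ℂ) * u ^ 2 - b * v ^ 2‖ := by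
  set t := u * conj v with ht
  have ht1 : t.re ^ 2 + t.im ^ 2 = 1 := by
    have : ‖t‖ ^ 2 = 1 := by rw [norm_mul, RCLike.norm_conj, hu1, hv1]; norm_num
    rw [Complex.sq_norm, normSq_apply] at this
    linear_combination this
  have ht_re : 0 ≤ t.re := by
    have : t.re = u.re * v.re + u.im * v.im := by simp [t, mul_re]
    rw [this]
    have := hu.1; have := hu.2; have := hv.1; have := hv.2
    positivity
  have ht_sq : u ^ 2 * conj (v ^ 2) = t ^ 2 := by rw [map_pow, ht]; ring
  have ht_sq_re : (t ^ 2).re = 2 * t.re ^ 2 - 1 := by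
    rw [sq t, mul_re]; linear_combination -ht1
  have hsq := norm_ofReal_mul_sub_ofReal_mul_sq a b hu1 hv1
  have hsq2 := norm_ofReal_mul_sub_ofReal_mul_sq a b (u := u ^ 2) (v := v ^ 2)
    (by rw [norm_pow, hu1, one_pow]) (by rw [norm_pow, hv1, one_pow])
  rw [ht_sq, ht_sq_re] at hsq2
  rw [← pow_le_pow_iff_left₀ (norm_nonneg _) (by positivity) two_ne_zero, mul_pow, hsq, hsq2]
  have ht_le : t.re ≤ 1 := by nlinarith [sq_nonneg t.im]
  nlinarith [sq_nonneg (a - b), mul_nonneg (mul_nonneg (mul_nonneg ha hb) (sub_nonneg.mpr ht_le))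
    (by positivity : 0 ≤ 7 + 8 * t.re)]

lemma norm_sub_le_two_mul_norm_Rmap_sub {z₀ z₁ : ℂ} (h₀ : z₀ ∈ firstQuadrant)
    (h₁ : z₁ ∈ firstQuadrant) : ‖z₀ - z₁‖ ≤ 2 * ‖Rmap z₀ - Rmap z₁‖ := by
  obtain ⟨u, hu, hu1, hz₀⟩ := exists_norm_eq_one_mem_firstQuadrant h₀
  obtain ⟨v, hv, hv1, hz₁⟩ := exists_norm_eq_one_mem_firstQuadrant h₁
  rw [hz₀, hz₁, Rmap_ofReal_mul (norm_nonneg _) hu1, Rmap_ofReal_mul (norm_nonneg _) hv1]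
  exact norm_ofReal_mul_sub_le_two_mul_norm_sq_sub (norm_nonneg _) (norm_nonneg _) hu hv hu1 hv1

lemma Rmap_mapsTo : Set.MapsTo Rmap firstQuadrant upperHalfPlane' := by
  intro z hz
  have : (z ^ 2).im = 2 * z.re * z.im := by rw [sq, mul_im]; ring
  change 0 ≤ (Rmap z).im
  rw [Rmap, div_ofReal_im, this]
  have := hz.1; have := hz.2
  positivity

lemma Rmap_injOn : Set.InjOn Rmap firstQuadrant := fun z₀ h₀ z₁ h₁ h => by
  have := norm_sub_le_two_mul_norm_Rmap_sub h₀ h₁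
  rw [h, sub_self, norm_zero, mul_zero] at this
  exact sub_eq_zero.mp (norm_le_zero_iff.mp this)

lemma Rmap_surjOn : Set.SurjOn Rmap firstQuadrant upperHalfPlane' := by
  intro w hw
  have harg₀ : 0 ≤ w.arg / 2 := by have := arg_nonneg_iff.mpr hw; positivity
  have harg₁ : w.arg / 2 ≤ Real.pi / 2 := by linarith [arg_le_pi w]
  refine ⟨‖w‖ * exp ((w.arg / 2 : ℝ) * I), ⟨?_, ?_⟩, ?_⟩
  · rw [re_ofReal_mul, exp_ofReal_mul_I_re]
    exact mul_nonneg (norm_nonneg w) (Real.cos_nonneg_of_mem_Icc ⟨by linarith, harg₁⟩)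
  · rw [im_ofReal_mul, exp_ofReal_mul_I_im]
    exact mul_nonneg (norm_nonneg w) (Real.sin_nonneg_of_nonneg_of_le_pi harg₀ (by linarith))
  · rw [Rmap_ofReal_mul (norm_nonneg w) (norm_exp_ofReal_mul_I _), ← exp_nat_mul]
    push_cast
    conv_rhs => rw [← norm_mul_exp_arg_mul_I w]
    ring_nf

/-- `R(z) = z²/|z|` is a bijection from the closed first quadrant onto the
closed upper half-plane; it is `3`-Lipschitz, and its inverse is `2`-Lipschitz. -/
theorem stmt_8 :
    Set.BijOn Rmap firstQuadrant upperHalfPlane' ∧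
    (∀ z₀ ∈ firstQuadrant, ∀ z₁ ∈ firstQuadrant,
      ‖Rmap z₀ - Rmap z₁‖ ≤ 3 * ‖z₀ - z₁‖) ∧
    (∀ w₀ ∈ upperHalfPlane', ∀ w₁ ∈ upperHalfPlane',
      ‖Function.invFunOn Rmap firstQuadrant w₀ -
          Function.invFunOn Rmap firstQuadrant w₁‖ ≤ 2 * ‖w₀ - w₁‖) := by
  refine ⟨⟨Rmap_mapsTo, Rmap_injOn, Rmap_surjOn⟩, fun z₀ _ z₁ _ => ?_, fun w₀ hw₀ w₁ hw₁ => ?_⟩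
  · simpa [dist_eq_norm] using Rmap_lipschitzWith.dist_le_mul z₀ z₁
  · have h₀ := Rmap_surjOn hw₀
    have h₁ := Rmap_surjOn hw₁
    have := norm_sub_le_two_mul_norm_Rmap_sub (Function.invFunOn_mem h₀)
      (Function.invFunOn_mem h₁)
    rwa [Function.invFunOn_eq h₀, Function.invFunOn_eq h₁] at this
end

section
/- Let X be a Banach space which is an absolute Lipschitz retract, and let N be a net in X. Then N is an absolute uniformly discrete Lipschitz retract. Conversely, if some net N in X is an absolute uniformly discrete Lipschitz retract and X is a Lipschitz retract of its bidual X**, then X is an absolute Lipschitz retract. -/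
open scoped NNReal ENNReal

/-- A metric space `X` is an absolute Lipschitz retract: for some `K`, every metric
superspace of `X` (i.e. every isometric embedding `i : X → Y`) admits a `K`-Lipschitz
retraction onto (the copy of) `X`. -/
def IsAbsoluteLipschitzRetract (X : Type*) [MetricSpace X] : Prop :=
  ∃ K : ℝ≥0, ∀ (Y : Type*) [MetricSpace Y] (i : X → Y), Isometry i →
    ∃ r : Y → X, LipschitzWith K r ∧ ∀ x : X, r (i x) = x

/-- A `δ`-uniformly discrete metric space `X` is an absolute uniformly discrete Lipschitz
retract: for some `K`, it is a `K`-Lipschitz retract of every `δ`-uniformly discrete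
metric superspace. -/
def IsAbsUnifDiscLipschitzRetract (X : Type*) [MetricSpace X] (δ : ℝ) : Prop :=
  ∃ K : ℝ≥0, ∀ (Y : Type*) [MetricSpace Y] (i : X → Y), Isometry i →
    (∀ y z : Y, y ≠ z → δ ≤ dist y z) →
    ∃ r : Y → X, LipschitzWith K r ∧ ∀ x : X, r (i x) = x


/-!
If `X` is an absolute Lipschitz retract and `Y` is a `δ`-discrete superspace of a `b`-dense net
`N ⊆ X`, glue `X` and `Y` along `N` and retract the glued space onto `X`; a nearest-point map
`X → N` then moves points by less than `b`, and this additive error is absorbed into the Lipschitz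
constant because distinct points of `Y` are at least `δ` apart.

Conversely, let `Y ⊇ X`. For `t > 0` the map `y ↦ t⁻¹ (d(y, t n) - d(t n₀, t n))_{n ∈ N}` sends
`Y` into `ℓ∞(N)` with all distances raised to at least `δ`, a `δ`-discrete space containing `N`
isometrically. Retracting it onto `N` and scaling back by `t` gives maps `Y → X` which are
`K`-Lipschitz and fix `X` up to an additive `O(t)`. A weak* cluster point in `X**` as `t → 0` is a
genuinely `K`-Lipschitz map extending the canonical embedding, and the retraction `X** → X`
finishes the proof.

In both directions the hypothesis is only applied to a Kuratowski-type superspace (`ℓ∞(X)`,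
resp. discretized `ℓ∞(N)`); this is also what makes the constructions independent of the universe
in which the superspaces live.
-/

open Filter Topology Metric
open scoped BoundedContinuousFunction

universe u v w

section Kuratowski

variable {X Y : Type*} [PseudoMetricSpace X] [PseudoMetricSpace Y]

noncomputable def kuratowskiMap (e : X → Y) (he : Continuous e) (y₀ y : Y) : X →ᵇ ℝ :=
  .ofNormedAddCommGroup (fun x => dist y (e x) - dist y₀ (e x)) (by fun_prop) (dist y y₀)
    fun x => abs_dist_sub_le y y₀ (e x)

@[simp]
theorem kuratowskiMap_apply (e : X → Y) (he : Continuous e) (y₀ y : Y) (x : X) :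
    kuratowskiMap e he y₀ y x = dist y (e x) - dist y₀ (e x) :=
  rfl

theorem lipschitzWith_kuratowskiMap (e : X → Y) (he : Continuous e) (y₀ : Y) :
    LipschitzWith 1 (kuratowskiMap e he y₀) :=
  LipschitzWith.of_dist_le_mul fun y z => by
    rw [NNReal.coe_one, one_mul, BoundedContinuousFunction.dist_le dist_nonneg]
    intro x
    simpa [Real.dist_eq] using abs_dist_sub_le y z (e x)

theorem isometry_kuratowskiMap_id (x₀ : X) : Isometry (kuratowskiMap id continuous_id x₀) := by
  refine Isometry.of_dist_eq fun x x' => le_antisymm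
    (by simpa using (lipschitzWith_kuratowskiMap id continuous_id x₀).dist_le_mul x x') ?_
  simpa [Real.dist_eq] using BoundedContinuousFunction.dist_coe_le_dist
    (f := kuratowskiMap id continuous_id x₀ x) (g := kuratowskiMap id continuous_id x₀ x') x'

theorem kuratowskiMap_apply_of_dist_eq_mul {e : X → Y} (he : Continuous e) {t : ℝ}
    (het : ∀ x x', dist (e x) (e x') = t * dist x x') (x₀ x : X) :
    kuratowskiMap e he (e x₀) (e x) = t • kuratowskiMap id continuous_id x₀ x := by
  ext x'
  simp [het, mul_sub]

end Kuratowski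

/-- `B` with every distance between distinct points raised to at least `δ`: a `δ`-uniformly
discrete space in which each `δ`-separated subset of `B` keeps its metric. -/
def Discretized (B : Type*) (_δ : ℝ) : Type _ := B

namespace Discretized

variable {B : Type*} {δ : ℝ}

def of (δ : ℝ) : B ≃ Discretized B δ := Equiv.refl B

variable [MetricSpace B]

open Classical in
noncomputable instance : MetricSpace (Discretized B δ) where
  dist u v := if u = v then 0 else max (dist ((of δ).symm u) ((of δ).symm v)) δ
  dist_self u := if_pos rfl
  dist_comm u v := by simp only [eq_comm (a := u), dist_comm]
  dist_triangle u v w := by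
    have h0 : ∀ a b : Discretized B δ, 0 ≤ max (dist ((of δ).symm a) ((of δ).symm b)) δ :=
      fun a b => le_max_of_le_left dist_nonneg
    split_ifs
    · positivity
    · exact add_nonneg le_rfl (h0 v w)
    · exact add_nonneg (h0 u v) le_rfl
    · exact add_nonneg (h0 u v) (h0 v w)
    · subst_vars; contradiction
    · subst_vars; simp
    · subst_vars; simp
    · refine max_le ((dist_triangle _ _ _).trans (add_le_add (le_max_left _ _) (le_max_left _ _)))
        (le_add_of_le_of_nonneg (le_max_right _ _) (h0 v w))
  eq_of_dist_eq_zero {u v} h := by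
    by_contra huv
    rw [if_neg huv] at h
    exact huv ((of δ).symm.injective
      (dist_eq_zero.1 (le_antisymm (h ▸ le_max_left _ _) dist_nonneg)))

open Classical in
theorem dist_of_of (a b : B) :
    dist (of δ a) (of δ b) = if a = b then 0 else max (dist a b) δ :=
  rfl

theorem le_dist {u v : Discretized B δ} (huv : u ≠ v) : δ ≤ dist u v := by
  obtain ⟨a, rfl⟩ := (of δ).surjective u
  obtain ⟨b, rfl⟩ := (of δ).surjective v
  rw [dist_of_of, if_neg (by simpa using huv)]
  exact le_max_right _ _

theorem dist_of_of_le (hδ : 0 ≤ δ) (a b : B) : dist (of δ a) (of δ b) ≤ dist a b + δ := by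
  rw [dist_of_of]
  split_ifs
  · positivity
  · exact max_le (le_add_of_nonneg_right hδ) (le_add_of_nonneg_left dist_nonneg)

theorem isometry_of_comp {Z : Type*} [PseudoMetricSpace Z] {f : Z → B} (hf : Isometry f)
    (hZ : ∀ z z' : Z, z ≠ z' → δ ≤ dist z z') : Isometry (of δ ∘ f) := by
  refine Isometry.of_dist_eq fun z z' => ?_
  rw [Function.comp_apply, Function.comp_apply, dist_of_of, hf.dist_eq]
  split_ifs with h
  · rw [← hf.dist_eq, h, dist_self]
  · exact max_eq_left (hZ z z' fun hzz => h (hzz ▸ rfl))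

end Discretized

theorem isometry_ulift_up {β : Type u} [PseudoMetricSpace β] :
    Isometry (ULift.up.{v} : β → ULift.{v} β) :=
  Isometry.of_dist_eq fun _ _ => rfl

theorem exists_retraction_dist_lt {X : Type*} [PseudoMetricSpace X] {N : Set X} {b : ℝ}
    (hN : ∀ x, infEDist x N < ENNReal.ofReal b) :
    ∃ p : X → N, (∀ x : X, dist x (p x) < b) ∧ ∀ n : N, p n = n := by
  have : ∀ x : X, ∃ q : N, dist x q < b ∧ (x ∈ N → (q : X) = x) := by
    intro x
    obtain ⟨q, hq, hxq⟩ := infEDist_lt_iff.1 (hN x)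
    have hxq := edist_lt_ofReal.1 hxq
    by_cases hx : x ∈ N
    · exact ⟨⟨x, hx⟩, by simpa using dist_nonneg.trans_lt hxq, fun _ => rfl⟩
    · exact ⟨⟨q, hq⟩, hxq, fun h => (hx h).elim⟩
  choose p hp hpN using this
  exact ⟨p, hp, fun n => Subtype.ext (hpN n n.2)⟩

theorem LipschitzWith.of_dist_le_mul_add_of_le_dist {α β : Type*} [PseudoMetricSpace α]
    [PseudoMetricSpace β] {f : α → β} {K : ℝ≥0} {C δ : ℝ} (hδ : 0 < δ)
    (hα : ∀ x y : α, x ≠ y → δ ≤ dist x y) (hf : ∀ x y, dist (f x) (f y) ≤ K * dist x y + C) :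
    LipschitzWith (K + (C / δ).toNNReal) f := by
  refine LipschitzWith.of_dist_le_mul fun x y => ?_
  rcases eq_or_ne x y with rfl | hxy
  · simp
  have hC : C ≤ (C / δ).toNNReal * dist x y := calc
    C = δ * (C / δ) := (mul_div_cancel₀ C hδ.ne').symm
    _ ≤ δ * (C / δ).toNNReal := by gcongr; exact Real.le_coe_toNNReal _
    _ ≤ dist x y * (C / δ).toNNReal := by gcongr; exact hα x y hxy
    _ = _ := mul_comm _ _
  calc dist (f x) (f y) ≤ K * dist x y + C := hf x y
    _ ≤ K * dist x y + (C / δ).toNNReal * dist x y := by gcongr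
    _ = _ := by push_cast; ring

theorem IsAbsoluteLipschitzRetract.exists_retraction_kuratowski {X : Type u} [MetricSpace X]
    (h : IsAbsoluteLipschitzRetract.{u, max u v} X) :
    ∃ K : ℝ≥0, ∀ x₀ : X, ∃ r : (X →ᵇ ℝ) → X,
      LipschitzWith K r ∧ ∀ x, r (kuratowskiMap id continuous_id x₀ x) = x := by
  obtain ⟨K, hK⟩ := h
  refine ⟨K, fun x₀ => ?_⟩
  obtain ⟨r, hr, hri⟩ := hK (ULift.{v} (X →ᵇ ℝ)) (ULift.up ∘ kuratowskiMap id continuous_id x₀)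
    (isometry_ulift_up.comp (isometry_kuratowskiMap_id x₀))
  exact ⟨r ∘ ULift.up, by simpa using hr.comp isometry_ulift_up.lipschitz, hri⟩

theorem IsAbsoluteLipschitzRetract.exists_lipschitzWith_extension {X : Type u} [MetricSpace X]
    (h : IsAbsoluteLipschitzRetract.{u, max u v} X) :
    ∃ K : ℝ≥0, ∀ (N : Set X) [Nonempty N] (Y : Type w) [MetricSpace Y] (i : N → Y),
      Isometry i → ∃ g : Y → X, LipschitzWith K g ∧ ∀ n : N, g (i n) = n := by
  obtain ⟨K, hK⟩ := h.exists_retraction_kuratowski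
  refine ⟨K, fun N _ Y _ i hi => ?_⟩
  obtain ⟨n₀⟩ := ‹Nonempty N›
  obtain ⟨r, hr, hrκ⟩ := hK n₀
  have hval : Isometry (Subtype.val : N → X) := isometry_subtype_coe
  have hL := toGlueL_isometry hval hi
  refine ⟨r ∘ kuratowskiMap _ hL.continuous (toGlueL hval hi n₀) ∘ toGlueR hval hi, ?_, fun n => ?_⟩
  · simpa using hr.comp ((lipschitzWith_kuratowskiMap _ _ _).comp
      (toGlueR_isometry hval hi).lipschitz)
  · have hLR := congrFun (toGlue_commute hval hi) n
    simp only [Function.comp_apply] at hLR ⊢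
    rw [← hLR, kuratowskiMap_apply_of_dist_eq_mul hL.continuous (t := 1) (by simp [hL.dist_eq]),
      one_smul, hrκ]

theorem IsAbsoluteLipschitzRetract.isAbsUnifDiscLipschitzRetract {X : Type u} [MetricSpace X]
    [Nonempty X] (h : IsAbsoluteLipschitzRetract.{u, max u v} X) {N : Set X} {b : ℝ}
    (hN : ∀ x, infEDist x N < ENNReal.ofReal b) {δ : ℝ} (hδ : 0 < δ) :
    IsAbsUnifDiscLipschitzRetract.{u, w} N δ := by
  obtain ⟨p, hp, hpN⟩ := exists_retraction_dist_lt hN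
  have : Nonempty N := .map p ‹_›
  obtain ⟨K, hK⟩ := h.exists_lipschitzWith_extension
  refine ⟨K + (2 * b / δ).toNNReal, fun Y _ i hi hY => ?_⟩
  obtain ⟨g, hg, hgi⟩ := hK N Y i hi
  refine ⟨p ∘ g, .of_dist_le_mul_add_of_le_dist hδ hY fun y z => ?_, fun n => by simp [hgi, hpN]⟩
  rw [Function.comp_apply, Function.comp_apply, Subtype.dist_eq]
  calc dist (p (g y) : X) (p (g z))
      ≤ dist (p (g y) : X) (g y) + dist (g y) (g z) + dist (g z) (p (g z)) := dist_triangle4 _ _ _ _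
    _ ≤ b + K * dist y z + b := by
      gcongr
      · exact (dist_comm (g y) _ ▸ hp (g y)).le
      · exact hg.dist_le_mul y z
      · exact (hp (g z)).le
    _ = K * dist y z + 2 * b := by ring

theorem IsAbsUnifDiscLipschitzRetract.exists_retraction_kuratowski {M : Type u} [MetricSpace M]
    {δ : ℝ} (h : IsAbsUnifDiscLipschitzRetract.{u, max u v} M δ)
    (hM : ∀ x y : M, x ≠ y → δ ≤ dist x y) (m₀ : M) :
    ∃ (K : ℝ≥0) (r : Discretized (M →ᵇ ℝ) δ → M), LipschitzWith K r ∧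
      ∀ m, r (Discretized.of δ (kuratowskiMap id continuous_id m₀ m)) = m := by
  obtain ⟨K, hK⟩ := h
  obtain ⟨r, hr, hri⟩ := hK (ULift.{v} (Discretized (M →ᵇ ℝ) δ))
    (ULift.up ∘ Discretized.of δ ∘ kuratowskiMap id continuous_id m₀)
    (isometry_ulift_up.comp (Discretized.isometry_of_comp (isometry_kuratowskiMap_id m₀) hM))
    fun u v huv => Discretized.le_dist fun h => huv (congrArg ULift.up h)
  exact ⟨K, r ∘ ULift.up, by simpa using hr.comp isometry_ulift_up.lipschitz, hri⟩

section Bidual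

variable {𝕜 E : Type*} [NontriviallyNormedField 𝕜] [SeminormedAddCommGroup E] [NormedSpace 𝕜 E]

theorem WeakDual.exists_tendsto_of_eventually_norm_le [ProperSpace 𝕜] {ι : Type*}
    (U : Ultrafilter ι) {u : ι → StrongDual 𝕜 E} {R : ℝ} (hu : ∀ᶠ n in U, ‖u n‖ ≤ R) :
    ∃ ψ : WeakDual 𝕜 E, Tendsto (fun n => StrongDual.toWeakDual (u n)) U (𝓝 ψ) := by
  obtain ⟨ψ, -, hψ⟩ := (isCompact_closedBall 0 R).ultrafilter_le_nhds
    (U.map (StrongDual.toWeakDual ∘ u)) (le_principal_iff.2 (hu.mono fun n hn => by simpa using hn))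
  exact ⟨ψ, hψ⟩

theorem WeakDual.norm_toStrongDual_le_of_tendsto {ι : Type*} {l : Filter ι} [l.NeBot]
    {u : ι → StrongDual 𝕜 E} {ψ : WeakDual 𝕜 E}
    (hψ : Tendsto (fun n => StrongDual.toWeakDual (u n)) l (𝓝 ψ)) {R : ℝ}
    (hu : ∀ᶠ n in l, ‖u n‖ ≤ R) : ‖toStrongDual ψ‖ ≤ R := by
  simpa using (isClosed_closedBall 0 R).mem_of_tendsto hψ (by simpa using hu)

end Bidual

open NormedSpace in
theorem exists_lipschitzWith_bidual_of_tendsto {ι X Y : Type*} [NormedAddCommGroup X]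
    [NormedSpace ℝ X] [PseudoMetricSpace Y] {l : Filter ι} [l.NeBot] {K : ℝ≥0} {ε : ι → ℝ}
    (hε : Tendsto ε l (𝓝 0)) {i : X → Y} {f : ι → Y → X}
    (hf : ∀ n y z, dist (f n y) (f n z) ≤ K * dist y z + ε n)
    (hfi : ∀ n x, dist (f n (i x)) x ≤ ε n) :
    ∃ g : Y → StrongDual ℝ (StrongDual ℝ X),
      LipschitzWith K g ∧ ∀ x, g (i x) = inclusionInDoubleDual ℝ X x := by
  set J := inclusionInDoubleDual ℝ X
  set U := Ultrafilter.of l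
  have hU : (U : Filter ι) ≤ l := Ultrafilter.of_le l
  have hbdd : ∀ y, ∀ᶠ n in l, ‖J (f n y)‖ ≤ K * dist y (i 0) + 2 := by
    intro y
    filter_upwards [hε.eventually_le_const one_pos] with n hn
    calc ‖J (f n y)‖ ≤ dist (f n y) 0 := by simpa using double_dual_bound ℝ X (f n y)
      _ ≤ dist (f n y) (f n (i 0)) + dist (f n (i 0)) 0 := dist_triangle _ _ _
      _ ≤ (K * dist y (i 0) + ε n) + ε n := add_le_add (hf n y (i 0)) (hfi n 0)
      _ ≤ K * dist y (i 0) + 2 := by linarith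
  choose G hG using fun y => WeakDual.exists_tendsto_of_eventually_norm_le U (hU (hbdd y))
  refine ⟨fun y => WeakDual.toStrongDual (G y), .of_dist_le_mul fun y z => ?_, fun x => ?_⟩
  · rw [dist_eq_norm]
    refine le_of_forall_pos_le_add fun η hη => ?_
    have hyz := WeakDual.norm_toStrongDual_le_of_tendsto (ψ := G y - G z)
      (u := fun n => J (f n y - f n z)) (by simpa using (hG y).sub (hG z))
      (R := K * dist y z + η) ?_
    · simpa using hyz
    filter_upwards [hU (hε.eventually_le_const hη)] with n hn
    calc ‖J (f n y - f n z)‖ ≤ dist (f n y) (f n z) := by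
          simpa [dist_eq_norm] using double_dual_bound ℝ X (f n y - f n z)
      _ ≤ K * dist y z + η := by linarith [hf n y z]
  · have hx : Tendsto (fun n => f n (i x)) l (𝓝 x) :=
      tendsto_iff_dist_tendsto_zero.2 (squeeze_zero (fun _ => dist_nonneg) (hfi · x) hε)
    have hJx := ((Dual.toWeakDual_continuous.comp J.continuous).tendsto x).comp (hx.mono_left hU)
    simp [tendsto_nhds_unique (hG (i x)) hJx]

theorem exists_approx_retraction {X : Type u} [NormedAddCommGroup X] [NormedSpace ℝ X]
    {N : Set X} {b δ : ℝ} (hN : ∀ x, infEDist x N < ENNReal.ofReal b) (hδ : 0 ≤ δ) {n₀ : N}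
    {K : ℝ≥0} {r : Discretized (N →ᵇ ℝ) δ → N} (hr : LipschitzWith K r)
    (hrκ : ∀ n, r (Discretized.of δ (kuratowskiMap id continuous_id n₀ n)) = n)
    {Y : Type*} [MetricSpace Y] {i : X → Y} (hi : Isometry i) {t : ℝ} (ht : 0 < t) :
    ∃ f : Y → X, (∀ y z, dist (f y) (f z) ≤ K * dist y z + t * (K * (δ + b) + b)) ∧
      ∀ x, dist (f (i x)) x ≤ t * (K * (δ + b) + b) := by
  -- `e` multiplies distances by `t`, so `t⁻¹ • kuratowskiMap e` extends the Kuratowski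
  -- embedding of `N`.
  set e : N → Y := fun n => i (t • (n : X))
  have he : Continuous e := by have := hi.continuous; fun_prop
  have het : ∀ n n', dist (e n) (e n') = t * dist n n' := fun n n' => by
    simp [e, hi.dist_eq, dist_smul₀, abs_of_pos ht, Subtype.dist_eq]
  set f : Y → X := fun y => t • (r (Discretized.of δ (t⁻¹ • kuratowskiMap e he (e n₀) y)) : X)
  have hfe : ∀ n, f (e n) = t • (n : X) := fun n => by
    simp [f, kuratowskiMap_apply_of_dist_eq_mul he het, smul_smul, inv_mul_cancel₀ ht.ne', hrκ]
  have hf : ∀ y z, dist (f y) (f z) ≤ K * dist y z + t * (K * δ) := fun y z => calc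
    dist (f y) (f z) = t * dist (r (Discretized.of δ (t⁻¹ • kuratowskiMap e he (e n₀) y)))
        (r (Discretized.of δ (t⁻¹ • kuratowskiMap e he (e n₀) z))) := by
      simp [f, dist_smul₀, abs_of_pos ht, Subtype.dist_eq]
    _ ≤ t * (K * (dist (t⁻¹ • kuratowskiMap e he (e n₀) y)
        (t⁻¹ • kuratowskiMap e he (e n₀) z) + δ)) := by
      gcongr
      exact (hr.dist_le_mul _ _).trans (by gcongr; exact Discretized.dist_of_of_le hδ _ _)
    _ ≤ t * (K * (t⁻¹ * dist y z + δ)) := by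
      gcongr
      refine (dist_smul₀ t⁻¹ (kuratowskiMap e he (e n₀) y) _).trans_le ?_
      rw [Real.norm_of_nonneg (inv_nonneg.2 ht.le)]
      gcongr
      simpa using (lipschitzWith_kuratowskiMap e he (e n₀)).dist_le_mul y z
    _ = K * dist y z + t * (K * δ) := by field_simp
  obtain ⟨p, hp, -⟩ := exists_retraction_dist_lt hN
  have hb : 0 ≤ b := dist_nonneg.trans (hp 0).le
  refine ⟨f, fun y z => (hf y z).trans ?_, fun x => ?_⟩
  · gcongr
    linarith [mul_nonneg K.coe_nonneg hb]
  set n := p (t⁻¹ • x)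
  have hxn : dist x (t • (n : X)) ≤ t * b := calc
    dist x (t • (n : X)) = dist (t • t⁻¹ • x) (t • (n : X)) := by
      rw [smul_smul, mul_inv_cancel₀ ht.ne', one_smul]
    _ = t * dist (t⁻¹ • x) n := by rw [dist_smul₀, Real.norm_of_nonneg ht.le]
    _ ≤ t * b := by gcongr; exact (hp _).le
  calc dist (f (i x)) x ≤ dist (f (i x)) (f (e n)) + dist (f (e n)) x := dist_triangle _ _ _
    _ ≤ (K * (t * b) + t * (K * δ)) + t * b := by
      gcongr
      · exact (hf _ _).trans (by rw [hi.dist_eq]; gcongr)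
      · rwa [hfe, dist_comm]
    _ = t * (K * (δ + b) + b) := by ring

theorem IsAbsUnifDiscLipschitzRetract.isAbsoluteLipschitzRetract {X : Type u}
    [NormedAddCommGroup X] [NormedSpace ℝ X] {N : Set X} {b δ : ℝ}
    (hN : ∀ x, infEDist x N < ENNReal.ofReal b) (hδ : 0 ≤ δ)
    (hsep : ∀ x ∈ N, ∀ y ∈ N, x ≠ y → δ ≤ dist x y)
    (h : IsAbsUnifDiscLipschitzRetract.{u, max u v} N δ)
    (hX : ∃ (K : ℝ≥0) (ρ : StrongDual ℝ (StrongDual ℝ X) → X),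
      LipschitzWith K ρ ∧ ∀ x, ρ (NormedSpace.inclusionInDoubleDual ℝ X x) = x) :
    IsAbsoluteLipschitzRetract.{u, w} X := by
  obtain ⟨K₀, ρ, hρ, hρJ⟩ := hX
  obtain ⟨p, -, -⟩ := exists_retraction_dist_lt hN
  obtain ⟨K, r, hr, hrκ⟩ := h.exists_retraction_kuratowski
    (fun m m' hmm => hsep m m.2 m' m'.2 (Subtype.coe_ne_coe.2 hmm)) (p 0)
  refine ⟨K₀ * K, fun Y _ i hi => ?_⟩
  choose f hf hfi using fun n : ℕ =>
    exists_approx_retraction hN hδ hr hrκ hi (Nat.one_div_pos_of_nat (n := n))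
  obtain ⟨g, hg, hgi⟩ := exists_lipschitzWith_bidual_of_tendsto
    (by simpa using tendsto_one_div_add_atTop_nhds_zero_nat.mul_const (K * (δ + b) + b)) hf hfi
  exact ⟨ρ ∘ g, hρ.comp hg, fun x => by simp [hgi, hρJ]⟩

theorem stmt_11_general (X : Type) [NormedAddCommGroup X] [NormedSpace ℝ X] :
    (IsAbsoluteLipschitzRetract X →
      ∀ N : Set X, IsNet N → ∀ δ : ℝ, 0 < δ →
        (∀ x ∈ N, ∀ y ∈ N, x ≠ y → δ ≤ dist x y) →
        IsAbsUnifDiscLipschitzRetract ↥N δ) ∧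
    ((∃ N : Set X, IsNet N ∧ ∃ δ : ℝ, 0 < δ ∧
        (∀ x ∈ N, ∀ y ∈ N, x ≠ y → δ ≤ dist x y) ∧
        IsAbsUnifDiscLipschitzRetract ↥N δ) →
      (∃ (K : ℝ≥0) (ρ : StrongDual ℝ (StrongDual ℝ X) → X),
        LipschitzWith K ρ ∧ ∀ x : X, ρ (NormedSpace.inclusionInDoubleDual ℝ X x) = x) →
      IsAbsoluteLipschitzRetract X) := by
  refine ⟨fun hX N ⟨_, b, _, _, _, hN⟩ δ hδ _ => hX.isAbsUnifDiscLipschitzRetract hN hδ, ?_⟩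
  rintro ⟨N, ⟨_, b, _, _, _, hN⟩, δ, hδ, hsep, hNδ⟩ hbidual
  exact hNδ.isAbsoluteLipschitzRetract hN hδ.le hsep hbidual

/-- If a Banach space `X` is an absolute Lipschitz retract then every
net `N` in `X` is an absolute uniformly discrete Lipschitz retract; conversely, if some
net `N` in `X` is an absolute uniformly discrete Lipschitz retract and `X` is a
Lipschitz retract of `X**`, then `X` is an absolute Lipschitz retract. -/
theorem stmt_11 (X : Type) [NormedAddCommGroup X] [NormedSpace ℝ X] [CompleteSpace X] :
    (IsAbsoluteLipschitzRetract X →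
      ∀ N : Set X, IsNet N → ∀ δ : ℝ, 0 < δ →
        (∀ x ∈ N, ∀ y ∈ N, x ≠ y → δ ≤ dist x y) →
        IsAbsUnifDiscLipschitzRetract ↥N δ) ∧
    ((∃ N : Set X, IsNet N ∧ ∃ δ : ℝ, 0 < δ ∧
        (∀ x ∈ N, ∀ y ∈ N, x ≠ y → δ ≤ dist x y) ∧
        IsAbsUnifDiscLipschitzRetract ↥N δ) →
      (∃ (K : ℝ≥0) (ρ : StrongDual ℝ (StrongDual ℝ X) → X),
        LipschitzWith K ρ ∧ ∀ x : X, ρ (NormedSpace.inclusionInDoubleDual ℝ X x) = x) →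
      IsAbsoluteLipschitzRetract X) :=
  stmt_11_general X
end

section
/- Let X be a metric space. Suppose there exist a subset M ⊆ X containing a distinguished point, a sequence of distinct points {μ_n}_{n=1}^∞ ⊆ M, and a sequence of retractions φ_n : M → M, n ∈ ℕ, satisfying: (i) φ_n(M) = M_n := {μ_1,…,μ_n} for every n; (ii) the closure in X of ⋃_{j=1}^∞ {μ_j} equals M; (iii) there exists K > 0 such that φ_n is K-Lipschitz for every n; (iv) φ_m ∘ φ_n = φ_n ∘ φ_m = φ_n for all m,n ∈ ℕ with n ≤ m. Then the Lipschitz-free space F(M) has a Schauder basis with basis constant at most K. -/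
open scoped NNReal ENNReal

/-!
Each `K`-Lipschitz retraction `φ n` linearizes to an operator `T n` on `𝓕(M)` of norm at most `K`,
with `T n (δ x) = δ (φ n x) - δ (φ n b)`. The relations `φ m ∘ φ n = φ (min m n)` make the `T n` a
chain of commuting projections with `T 0 = 0`. Since `φ (n + 1)` and `φ n` can only differ at points
that `φ (n + 1)` sends to `μ (n + 1)`, every increment `T (n + 1) - T n` has rank one, spanned by
`z n = δ (μ (n + 1)) - δ (φ n (μ (n + 1)))`. Density of the `μ j` and the uniform bound `‖T n‖ ≤ K`
give `T n → id` strongly, so `z` is a Schauder basis whose partial-sum projections are the `T n`.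
-/

open Filter Topology

theorem Submodule.eq_top_of_isClosed_of_span_dense {𝕜 E : Type*} [Semiring 𝕜] [AddCommMonoid E]
    [TopologicalSpace E] [Module 𝕜 E] [ContinuousAdd E] [ContinuousConstSMul 𝕜 E] {s : Set E}
    (hs : (span 𝕜 s).topologicalClosure = ⊤) {p : Submodule 𝕜 E} (hp : IsClosed (p : Set E))
    (hsp : s ⊆ p) : p = ⊤ :=
  top_unique (hs ▸ (span 𝕜 s).topologicalClosure_minimal (span_le.2 hsp) hp)

theorem LipschitzWith.isClosed_setOf_tendsto {ι α β : Type*} [PseudoMetricSpace α]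
    [PseudoMetricSpace β] {l : Filter ι} {f : ι → α → β} {K : ℝ≥0} (hf : ∀ i, LipschitzWith K (f i))
    {g : α → β} (hg : Continuous g) : IsClosed {x | Tendsto (f · x) l (𝓝 (g x))} :=
  (LipschitzWith.uniformEquicontinuous f K hf).equicontinuous.isClosed_setOfPred_tendsto hg

theorem ContinuousLinearMap.tendsto_apply_of_span_dense {ι 𝕜 E : Type*} [NontriviallyNormedField 𝕜]
    [NormedAddCommGroup E] [NormedSpace 𝕜 E] {l : Filter ι} {T : ι → E →L[𝕜] E} {K : ℝ≥0}
    (hT : ∀ i, ‖T i‖ ≤ K) {s : Set E} (hs : (Submodule.span 𝕜 s).topologicalClosure = ⊤)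
    (hconv : ∀ x ∈ s, Tendsto (fun i ↦ T i x) l (𝓝 x)) (y : E) :
    Tendsto (fun i ↦ T i y) l (𝓝 y) := by
  let p : Submodule 𝕜 E :=
    { carrier := {x | Tendsto (fun i ↦ T i x) l (𝓝 x)}
      add_mem' := fun hx hy ↦ by simpa using hx.add hy
      zero_mem' := by simpa using tendsto_const_nhds
      smul_mem' := fun c _ hx ↦ by simpa using hx.const_smul c }
  have hp : IsClosed (p : Set E) :=
    LipschitzWith.isClosed_setOf_tendsto (fun i ↦ opNorm_le_iff_lipschitz.1 (hT i)) continuous_id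
  change y ∈ p
  rw [Submodule.eq_top_of_isClosed_of_span_dense hs hp hconv]
  trivial

section ProjectionBasis

variable {E : Type*} [NormedAddCommGroup E] [NormedSpace ℝ E] {P : ℕ → E →L[ℝ] E} {z : ℕ → E}

theorem apply_eq_ite_of_range_sub_eq_span (hPP : ∀ m n, (P m).comp (P n) = P (min m n))
    (hrange : ∀ n, LinearMap.range (P (n + 1) - P n : E →ₗ[ℝ] E) = ℝ ∙ z n) (k i : ℕ) :
    P k (z i) = if i < k then z i else 0 := by
  obtain ⟨w, hw⟩ : z i ∈ LinearMap.range (P (i + 1) - P i : E →ₗ[ℝ] E) :=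
    hrange i ▸ Submodule.mem_span_singleton_self _
  have hPk : ∀ n, P k (P n w) = P (min k n) w := fun n ↦ by
    rw [← ContinuousLinearMap.comp_apply, hPP]
  rw [← hw]
  simp only [LinearMap.sub_apply, ContinuousLinearMap.coe_coe, map_sub, hPk]
  split_ifs with hik
  · rw [min_eq_right hik, min_eq_right hik.le]
  · rw [min_eq_left (by omega), min_eq_left (by omega), sub_self]

theorem apply_sum_eq_of_range_sub_eq_span (hPP : ∀ m n, (P m).comp (P n) = P (min m n))
    (hrange : ∀ n, LinearMap.range (P (n + 1) - P n : E →ₗ[ℝ] E) = ℝ ∙ z n) (a : ℕ → ℝ) {k n : ℕ}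
    (hkn : k ≤ n) : P k (∑ i ∈ Finset.range n, a i • z i) = ∑ i ∈ Finset.range k, a i • z i := by
  simp only [map_sum, map_smul, apply_eq_ite_of_range_sub_eq_span hPP hrange, smul_ite, smul_zero]
  rw [← Finset.sum_filter]
  congr 1
  ext i
  simp only [Finset.mem_filter, Finset.mem_range]
  omega

theorem sum_eq_apply_of_tendsto (hPP : ∀ m n, (P m).comp (P n) = P (min m n))
    (hrange : ∀ n, LinearMap.range (P (n + 1) - P n : E →ₗ[ℝ] E) = ℝ ∙ z n) {a : ℕ → ℝ} {y : E}
    (ha : Tendsto (fun n ↦ ∑ i ∈ Finset.range n, a i • z i) atTop (𝓝 y)) (k : ℕ) :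
    ∑ i ∈ Finset.range k, a i • z i = P k y := by
  refine tendsto_nhds_unique (tendsto_const_nhds.congr' ?_) (((P k).continuous.tendsto y).comp ha)
  filter_upwards [eventually_ge_atTop k] with n hkn
  exact (apply_sum_eq_of_range_sub_eq_span hPP hrange a hkn).symm

theorem isSchauderBasis_of_range_sub_eq_span (hP0 : P 0 = 0)
    (hPP : ∀ m n, (P m).comp (P n) = P (min m n))
    (hrange : ∀ n, LinearMap.range (P (n + 1) - P n : E →ₗ[ℝ] E) = ℝ ∙ z n) (hz : ∀ n, z n ≠ 0)
    (htend : ∀ y, Tendsto (fun n ↦ P n y) atTop (𝓝 y)) : IsSchauderBasis z := by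
  intro y
  have hmem (n : ℕ) : (P (n + 1) - P n : E →ₗ[ℝ] E) y ∈ ℝ ∙ z n := hrange n ▸ ⟨y, rfl⟩
  choose a ha using fun n ↦ Submodule.mem_span_singleton.1 (hmem n)
  refine ⟨a, ?_, fun c hc ↦ funext fun n ↦ smul_left_injective ℝ (hz n) ?_⟩
  · have hsum (n : ℕ) : ∑ i ∈ Finset.range n, a i • z i = P n y := by
      simp only [ha, LinearMap.sub_apply, ContinuousLinearMap.coe_coe]
      rw [Finset.sum_range_sub (P · y), hP0, zero_apply, sub_zero]
    simpa only [hsum] using htend y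
  · simp only [ha, LinearMap.sub_apply, ContinuousLinearMap.coe_coe,
      ← sum_eq_apply_of_tendsto hPP hrange hc, Finset.sum_range_succ_sub_sum]

end ProjectionBasis

structure IsNestedRetractionSeq {α : Type*} (μ : ℕ → α) (φ : ℕ → α → α) : Prop where
  range_eq : ∀ n, Set.range (φ n) = μ '' Set.Iic n
  apply_eq : ∀ n, ∀ j ≤ n, φ n (μ j) = μ j
  comp_eq : ∀ m n, n ≤ m → φ m ∘ φ n = φ n ∧ φ n ∘ φ m = φ n

namespace IsNestedRetractionSeq

variable {α : Type*} {μ : ℕ → α} {φ : ℕ → α → α}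

theorem exists_apply_eq (hφ : IsNestedRetractionSeq μ φ) (n : ℕ) (x : α) :
    ∃ j ≤ n, φ n x = μ j := by
  obtain ⟨j, hj, hjx⟩ := hφ.range_eq n ▸ Set.mem_range_self x
  exact ⟨j, hj, hjx.symm⟩

theorem apply_apply (hφ : IsNestedRetractionSeq μ φ) (m n : ℕ) (x : α) :
    φ m (φ n x) = φ (min m n) x := by
  rcases le_total n m with h | h
  · rw [min_eq_right h, ← Function.comp_apply (f := φ m), (hφ.comp_eq m n h).1]
  · rw [min_eq_left h, ← Function.comp_apply (f := φ m), (hφ.comp_eq n m h).2]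

theorem zero_apply (hφ : IsNestedRetractionSeq μ φ) (x : α) : φ 0 x = μ 0 := by
  obtain ⟨j, hj, hjx⟩ := hφ.exists_apply_eq 0 x
  rwa [Nat.le_zero.1 hj] at hjx

theorem apply_succ_ne (hφ : IsNestedRetractionSeq μ φ) (hμ : Function.Injective μ) (n : ℕ) :
    φ n (μ (n + 1)) ≠ μ (n + 1) := by
  obtain ⟨j, hj, hjx⟩ := hφ.exists_apply_eq n (μ (n + 1))
  rw [hjx, hμ.ne_iff]
  omega

theorem apply_eq_or_apply_succ_eq (hφ : IsNestedRetractionSeq μ φ) (n : ℕ) (x : α) :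
    φ n x = φ (n + 1) x ∨ φ (n + 1) x = μ (n + 1) ∧ φ n x = φ n (μ (n + 1)) := by
  obtain ⟨j, hj, hjx⟩ := hφ.exists_apply_eq (n + 1) x
  have hnx : φ n x = φ n (μ j) := by rw [← hjx, hφ.apply_apply, min_eq_left n.le_succ]
  rcases Nat.of_le_succ hj with hjn | rfl
  · exact .inl (by rw [hnx, hjx, hφ.apply_eq n j hjn])
  · exact .inr ⟨hjx, hnx⟩

end IsNestedRetractionSeq

theorem tendsto_apply_of_lipschitzWith {M : Type*} [MetricSpace M] {μ : ℕ → M} {φ : ℕ → M → M}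
    {K : ℝ≥0} (hretr : ∀ n, ∀ j ≤ n, φ n (μ j) = μ j) (hdense : Dense (Set.range μ))
    (hlip : ∀ n, LipschitzWith K (φ n)) (x : M) : Tendsto (φ · x) atTop (𝓝 x) := by
  have hclosed := LipschitzWith.isClosed_setOf_tendsto (l := atTop) hlip continuous_id
  refine hclosed.closure_subset_iff.2 ?_ (hdense x)
  rintro _ ⟨j, rfl⟩
  exact tendsto_const_nhds.congr' ((eventually_ge_atTop j).mono fun n hn ↦ (hretr n j hn).symm)

namespace IsLipFreeSpace

variable {M : Type*} [MetricSpace M] {b : M} {F : Type} [NormedAddCommGroup F] [NormedSpace ℝ F]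
  [CompleteSpace F] {δ : M → F}

theorem clm_ext {Z : Type*} [NormedAddCommGroup Z] [NormedSpace ℝ Z] (hF : IsLipFreeSpace M b F δ)
    {A B : F →L[ℝ] Z} (h : ∀ x, A (δ x) = B (δ x)) : A = B :=
  ContinuousLinearMap.ext_on (Submodule.dense_iff_topologicalClosure_eq_top.2 hF.dense_span)
    (Set.forall_mem_range.2 h)

theorem exists_clm_apply_eq (hF : IsLipFreeSpace M b F δ) {φ : M → M} {K : ℝ≥0}
    (hφ : LipschitzWith K φ) :
    ∃ T : F →L[ℝ] F, ‖T‖ ≤ K ∧ ∀ x, T (δ x) = δ (φ x) - δ (φ b) := by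
  refine hF.extend F K _ (LipschitzWith.of_dist_le_mul fun x y ↦ ?_) (sub_self _)
  rw [dist_sub_right, hF.isometry.dist_eq]
  exact hφ.dist_le_mul x y

section Linearization

variable {μ : ℕ → M} {φ : ℕ → M → M} {T : ℕ → F →L[ℝ] F}

theorem comp_eq_min (hF : IsLipFreeSpace M b F δ) (hφ : IsNestedRetractionSeq μ φ)
    (hT : ∀ n x, T n (δ x) = δ (φ n x) - δ (φ n b)) (m n : ℕ) :
    (T m).comp (T n) = T (min m n) :=
  hF.clm_ext fun x ↦ by
    simp only [ContinuousLinearMap.comp_apply, map_sub, hT, hφ.apply_apply]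
    abel

theorem zero_eq (hF : IsLipFreeSpace M b F δ) (hφ : IsNestedRetractionSeq μ φ)
    (hT : ∀ n x, T n (δ x) = δ (φ n x) - δ (φ n b)) : T 0 = 0 :=
  hF.clm_ext fun x ↦ by simp [hT, hφ.zero_apply]

theorem range_sub_eq_span (hF : IsLipFreeSpace M b F δ) (hφ : IsNestedRetractionSeq μ φ)
    (hT : ∀ n x, T n (δ x) = δ (φ n x) - δ (φ n b)) (n : ℕ) :
    LinearMap.range (T (n + 1) - T n : F →ₗ[ℝ] F) = ℝ ∙ (δ (μ (n + 1)) - δ (φ n (μ (n + 1)))) := by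
  set z := δ (μ (n + 1)) - δ (φ n (μ (n + 1)))
  have hstep (x : M) : δ (φ (n + 1) x) - δ (φ n x) ∈ ℝ ∙ z := by
    rcases hφ.apply_eq_or_apply_succ_eq n x with h | ⟨h1, h2⟩
    · rw [h, sub_self]
      exact zero_mem _
    · rw [h1, h2]
      exact Submodule.mem_span_singleton_self _
  apply le_antisymm
  · rw [LinearMap.range_le_iff_comap]
    refine Submodule.eq_top_of_isClosed_of_span_dense hF.dense_span ?_ ?_
    · exact (Submodule.closed_of_finiteDimensional (ℝ ∙ z)).preimage (T (n + 1) - T n).continuous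
    rintro _ ⟨x, rfl⟩
    have hdiff : T (n + 1) (δ x) - T n (δ x)
        = (δ (φ (n + 1) x) - δ (φ n x)) - (δ (φ (n + 1) b) - δ (φ n b)) := by
      rw [hT, hT]
      abel
    simpa [hdiff] using sub_mem (hstep x) (hstep b)
  · rw [Submodule.span_singleton_le_iff_mem]
    refine ⟨z, ?_⟩
    simp [z, hT, hφ.apply_apply, hφ.apply_eq (n + 1) (n + 1) le_rfl]

theorem tendsto_apply (hF : IsLipFreeSpace M b F δ) {K : ℝ≥0}
    (hT : ∀ n x, T n (δ x) = δ (φ n x) - δ (φ n b)) (hTK : ∀ n, ‖T n‖ ≤ K)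
    (hφ : ∀ x, Tendsto (φ · x) atTop (𝓝 x)) (y : F) : Tendsto (fun n ↦ T n y) atTop (𝓝 y) := by
  refine ContinuousLinearMap.tendsto_apply_of_span_dense hTK hF.dense_span ?_ y
  rintro _ ⟨x, rfl⟩
  have hδ := hF.isometry.continuous
  simpa [hT, hF.map_base] using ((hδ.tendsto x).comp (hφ x)).sub ((hδ.tendsto b).comp (hφ b))

end Linearization

end IsLipFreeSpace

theorem stmt_14_general (X : Type*) [MetricSpace X] (M : Set X) (b : ↥M)
    (μ : ℕ → ↥M) (hμ : Function.Injective μ)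
    (φ : ℕ → (↥M → ↥M))
    (himage : ∀ n : ℕ, Set.range (φ n) = μ '' Set.Iic n)
    (hretr : ∀ n : ℕ, ∀ j ≤ n, φ n (μ j) = μ j)
    (hdense : closure (Subtype.val '' Set.range μ) = M)
    (K : ℝ≥0) (hlip : ∀ n : ℕ, LipschitzWith K (φ n))
    (hcomm : ∀ m n : ℕ, n ≤ m → φ m ∘ φ n = φ n ∧ φ n ∘ φ m = φ n)
    (F : Type) [NormedAddCommGroup F] [NormedSpace ℝ F] [CompleteSpace F]
    (δ : ↥M → F) (hF : IsLipFreeSpace ↥M b F δ) :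
    ∃ z : ℕ → F, IsSchauderBasis z ∧
      ∀ (y : F) (a : ℕ → ℝ),
        Filter.Tendsto (fun n => ∑ i ∈ Finset.range n, a i • z i) Filter.atTop (nhds y) →
        ∀ n : ℕ, ‖∑ i ∈ Finset.range n, a i • z i‖ ≤ (K : ℝ) * ‖y‖ := by
  have hφ : IsNestedRetractionSeq μ φ := ⟨himage, hretr, hcomm⟩
  have hφx := tendsto_apply_of_lipschitzWith hretr (Subtype.dense_iff.2 hdense.ge) hlip
  choose T hTK hT using fun n ↦ hF.exists_clm_apply_eq (hlip n)
  have hTT := hF.comp_eq_min hφ hT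
  have hrange := hF.range_sub_eq_span hφ hT
  refine ⟨fun n ↦ δ (μ (n + 1)) - δ (φ n (μ (n + 1))), ?_, fun y a ha n ↦ ?_⟩
  · refine isSchauderBasis_of_range_sub_eq_span (hF.zero_eq hφ hT) hTT hrange (fun n ↦ ?_)
      (hF.tendsto_apply hT hTK hφx)
    exact sub_ne_zero.2 (hF.isometry.injective.ne (hφ.apply_succ_ne hμ n).symm)
  · rw [sum_eq_apply_of_tendsto hTT hrange ha n]
    exact (T n).le_of_opNorm_le (hTK n) y

/-- If a subset `M` of a metric space `X` carries a sequence of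
distinct points `μ` and uniformly `K`-Lipschitz commuting retractions `φ n` of `M` onto
`{μ 0, …, μ n}` whose union of images is dense in `M`, then `𝓕(M)` has a Schauder basis
with basis constant at most `K`. -/
theorem stmt_14 (X : Type*) [MetricSpace X] (M : Set X) (b : ↥M)
    (μ : ℕ → ↥M) (hμ : Function.Injective μ)
    (φ : ℕ → (↥M → ↥M))
    (himage : ∀ n : ℕ, Set.range (φ n) = μ '' Set.Iic n)
    (hretr : ∀ n : ℕ, ∀ j ≤ n, φ n (μ j) = μ j)
    (hdense : closure (Subtype.val '' Set.range μ) = M)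
    (K : ℝ≥0) (hK : 0 < K) (hlip : ∀ n : ℕ, LipschitzWith K (φ n))
    (hcomm : ∀ m n : ℕ, n ≤ m → φ m ∘ φ n = φ n ∧ φ n ∘ φ m = φ n)
    (F : Type) [NormedAddCommGroup F] [NormedSpace ℝ F] [CompleteSpace F]
    (δ : ↥M → F) (hF : IsLipFreeSpace ↥M b F δ) :
    ∃ z : ℕ → F, IsSchauderBasis z ∧
      ∀ (y : F) (a : ℕ → ℝ),
        Filter.Tendsto (fun n => ∑ i ∈ Finset.range n, a i • z i) Filter.atTop (nhds y) →
        ∀ n : ℕ, ‖∑ i ∈ Finset.range n, a i • z i‖ ≤ (K : ℝ) * ‖y‖ :=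
  stmt_14_general X M b μ hμ φ himage hretr hdense K hlip hcomm F δ hF
end

section
/- Let X be a Banach space with a normalized unconditional Schauder basis E = {e_i}_{i∈ℕ} and let M = M(E) be the integer grid associated to E. Then there exists a sequence of retractions φ_n : M → M and a sequence of distinct points μ_n ∈ M, n ∈ ℕ, satisfying: (i) φ_n(M) = {μ_1,…,μ_n} for every n; (ii) {μ_j : j ∈ ℕ} is dense in M (indeed its closure in X is M); (iii) each φ_n is K-Lipschitz with K = uc(E) + 2·bc(E); (iv) φ_m ∘ φ_n = φ_n ∘ φ_m = φ_n for all n ≤ m. -/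
open scoped NNReal ENNReal

/-- `e` is an unconditional Schauder basis: it is a Schauder basis and every basis
expansion converges unconditionally (i.e. is summable). -/
def IsUnconditionalSchauderBasis {Y : Type*} [NormedAddCommGroup Y] [NormedSpace ℝ Y]
    (e : ℕ → Y) : Prop :=
  IsSchauderBasis e ∧ ∀ (a : ℕ → ℝ) (y : Y),
    Filter.Tendsto (fun n => ∑ i ∈ Finset.range n, a i • e i) Filter.atTop (nhds y) →
    Summable fun i => a i • e i

/-- The basis constant `bc(E)` of a Schauder basis, expressed via finite combinations. -/
noncomputable def basisConstant {Y : Type*} [NormedAddCommGroup Y] [NormedSpace ℝ Y]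
    (e : ℕ → Y) : ℝ :=
  sInf {C : ℝ | 0 ≤ C ∧ ∀ (a : ℕ → ℝ) (m n : ℕ), m ≤ n →
    ‖∑ i ∈ Finset.range m, a i • e i‖ ≤ C * ‖∑ i ∈ Finset.range n, a i • e i‖}

/-- The unconditional constant `uc(E)` of a basis, expressed via finite combinations
and sign changes. -/
noncomputable def unconditionalConstant {Y : Type*} [NormedAddCommGroup Y]
    [NormedSpace ℝ Y] (e : ℕ → Y) : ℝ :=
  sInf {C : ℝ | 0 ≤ C ∧ ∀ (a ε : ℕ → ℝ) (s : Finset ℕ), (∀ i, ε i = 1 ∨ ε i = -1) →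
    ‖∑ i ∈ s, (ε i * a i) • e i‖ ≤ C * ‖∑ i ∈ s, a i • e i‖}

/-- The integer grid `M(E)` associated to a basis `e`: all vectors whose basis expansion
has integer coefficients. -/
def integerGrid {Y : Type*} [NormedAddCommGroup Y] [NormedSpace ℝ Y] (e : ℕ → Y) :
    Set Y :=
  {x | ∃ a : ℕ → ℤ,
    Filter.Tendsto (fun n => ∑ i ∈ Finset.range n, (a i : ℝ) • e i) Filter.atTop (nhds x)}

/-!
Identify `M(E)` with `ℕ →₀ ℤ` through `c ↦ ∑ cᵢ eᵢ`. Exhaust `ℕ →₀ ℤ` by boxes `[-b, b]`, each one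
unit larger than the previous one in a single coordinate, and enumerate the grid box by box. The
first `n + 1` points then lie between two consecutive boxes `B ⊆ B'`, and `φ n` clamps a point to
`B'` if that lands among them, and to `B` otherwise. Clamping to a box shrinks every coordinate
difference, so it is `uc(E)`-Lipschitz; switching from `B'` to `B` moves a point by a single `± eᵢ`,
while distinct grid points are at distance at least `1 / (2 bc(E))`, which accounts for the term
`2 bc(E)`. That `uc(E)` and `bc(E)` are finite is Banach's theorem that the coordinate functionals
of a basis of a Banach space are continuous (open mapping theorem).
-/

open Filter Finset Topology

namespace IsSchauderBasis

variable {Y : Type*} [NormedAddCommGroup Y] [NormedSpace ℝ Y] {e : ℕ → Y}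

noncomputable def coeff (hb : IsSchauderBasis e) (y : Y) : ℕ → ℝ := (hb y).exists.choose

theorem tendsto_coeff (hb : IsSchauderBasis e) (y : Y) :
    Tendsto (fun n => ∑ i ∈ range n, hb.coeff y i • e i) atTop (𝓝 y) :=
  (hb y).exists.choose_spec

theorem coeff_eq (hb : IsSchauderBasis e) {y : Y} {a : ℕ → ℝ}
    (ha : Tendsto (fun n => ∑ i ∈ range n, a i • e i) atTop (𝓝 y)) : hb.coeff y = a :=
  (hb y).unique (hb.tendsto_coeff y) ha

theorem coeff_add (hb : IsSchauderBasis e) (y z : Y) :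
    hb.coeff (y + z) = hb.coeff y + hb.coeff z :=
  hb.coeff_eq <| by
    simpa only [Pi.add_apply, add_smul, sum_add_distrib] using
      (hb.tendsto_coeff y).add (hb.tendsto_coeff z)

theorem coeff_smul (hb : IsSchauderBasis e) (r : ℝ) (y : Y) :
    hb.coeff (r • y) = r • hb.coeff y :=
  hb.coeff_eq <| by
    simpa only [Pi.smul_apply, smul_eq_mul, mul_smul, ← smul_sum] using
      (hb.tendsto_coeff y).const_smul r

theorem coeff_sum (hb : IsSchauderBasis e) (s : Finset ℕ) (a : ℕ → ℝ) :
    hb.coeff (∑ i ∈ s, a i • e i) = fun i => if i ∈ s then a i else 0 := by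
  refine hb.coeff_eq (tendsto_const_nhds.congr' ?_)
  obtain ⟨N, hN⟩ := s.exists_nat_subset_range
  filter_upwards [eventually_ge_atTop N] with n hn
  simp only [ite_smul, zero_smul]
  rw [← sum_filter]
  congr 1
  ext i
  simp only [mem_filter, mem_range]
  exact ⟨fun hi => ⟨(mem_range.1 (hN hi)).trans_le hn, hi⟩, And.right⟩

theorem coeff_basis (hb : IsSchauderBasis e) (j : ℕ) : hb.coeff (e j) = Pi.single j 1 := by
  simpa [funext_iff, Pi.single_apply] using hb.coeff_sum {j} fun _ => 1

theorem ne_zero (hb : IsSchauderBasis e) (j : ℕ) : e j ≠ 0 := by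
  intro h
  have h0 : hb.coeff 0 = 0 := hb.coeff_eq (by simp)
  have := congrFun (h ▸ hb.coeff_basis j) j
  simp [h0] at this

noncomputable def coeffₗ (hb : IsSchauderBasis e) (i : ℕ) : Y →ₗ[ℝ] ℝ where
  toFun y := hb.coeff y i
  map_add' y z := by simp [hb.coeff_add]
  map_smul' r y := by simp [hb.coeff_smul]

end IsSchauderBasis

section OpenMapping

variable {Y : Type*} [NormedAddCommGroup Y] [NormedSpace ℝ Y] {e : ℕ → Y}

/-- Sequences of partial sums `∑ i < n, a i • e i` that converge, viewed as continuous maps on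
the one-point compactification of `ℕ` (the limit sits at `∞`). -/
def partialSumSubmodule (e : ℕ → Y) : Submodule ℝ C(OnePoint ℕ, Y) :=
  (ContinuousMap.evalCLM (M := Y) ℝ ((0 : ℕ) : OnePoint ℕ)).ker ⊓
    ⨅ i : ℕ, (ℝ ∙ e i).comap ((ContinuousMap.evalCLM ℝ ((i + 1 : ℕ) : OnePoint ℕ) -
      ContinuousMap.evalCLM ℝ (i : OnePoint ℕ) : C(OnePoint ℕ, Y) →L[ℝ] Y) :
        C(OnePoint ℕ, Y) →ₗ[ℝ] Y)

theorem mem_partialSumSubmodule {g : C(OnePoint ℕ, Y)} :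
    g ∈ partialSumSubmodule e ↔ g (0 : ℕ) = 0 ∧ ∀ i : ℕ, g (i + 1 : ℕ) - g i ∈ ℝ ∙ e i := by
  simp [partialSumSubmodule]

theorem isClosed_partialSumSubmodule : IsClosed (partialSumSubmodule e : Set C(OnePoint ℕ, Y)) := by
  refine (ContinuousLinearMap.isClosed_ker _).inter ?_
  rw [Submodule.coe_iInf]
  exact isClosed_iInter fun i =>
    (Submodule.closed_of_finiteDimensional (ℝ ∙ e i)).preimage (ContinuousLinearMap.continuous _)

theorem exists_eq_sum_of_mem_partialSumSubmodule {g : C(OnePoint ℕ, Y)}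
    (hg : g ∈ partialSumSubmodule e) : ∃ a : ℕ → ℝ, ∀ n : ℕ, g n = ∑ i ∈ range n, a i • e i := by
  rw [mem_partialSumSubmodule] at hg
  choose a ha using fun i => Submodule.mem_span_singleton.1 (hg.2 i)
  refine ⟨a, fun n => ?_⟩
  rw [sum_congr rfl fun i _ => ha i, sum_range_sub (fun n : ℕ => g n), hg.1, sub_zero]

variable (hb : IsSchauderBasis e)
include hb

noncomputable def IsSchauderBasis.partialSums (y : Y) : C(OnePoint ℕ, Y) where
  toFun x := x.elim y fun n => ∑ i ∈ range n, hb.coeff y i • e i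
  continuous_toFun := (OnePoint.continuous_iff_from_nat (fun x : OnePoint ℕ =>
    x.elim y fun n => ∑ i ∈ range n, hb.coeff y i • e i)).2 (hb.tendsto_coeff y)

theorem IsSchauderBasis.partialSums_apply (y : Y) (n : ℕ) :
    hb.partialSums y n = ∑ i ∈ range n, hb.coeff y i • e i :=
  rfl

theorem IsSchauderBasis.partialSums_infty (y : Y) : hb.partialSums y OnePoint.infty = y :=
  rfl

theorem IsSchauderBasis.partialSums_mem (y : Y) : hb.partialSums y ∈ partialSumSubmodule e :=
  mem_partialSumSubmodule.2 ⟨sum_range_zero fun i => hb.coeff y i • e i,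
    fun i => Submodule.mem_span_singleton.2 ⟨hb.coeff y i, by
      rw [hb.partialSums_apply, hb.partialSums_apply, sum_range_succ, add_sub_cancel_left]⟩⟩

theorem IsSchauderBasis.eq_partialSums {g : C(OnePoint ℕ, Y)}
    (hg : g ∈ partialSumSubmodule e) : g = hb.partialSums (g OnePoint.infty) := by
  obtain ⟨a, ha⟩ := exists_eq_sum_of_mem_partialSumSubmodule hg
  have hlim := (OnePoint.continuous_iff_from_nat g).1 g.continuous
  simp only [ha] at hlim
  have hcoeff := hb.coeff_eq hlim
  ext x
  induction x using OnePoint.rec with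
  | infty => rfl
  | coe n => rw [hb.partialSums_apply, hcoeff, ha]

/-- Evaluation at `∞` is a continuous bijection from `partialSumSubmodule e` onto `Y`, so its
inverse `y ↦ hb.partialSums y` is bounded. -/
theorem IsSchauderBasis.exists_norm_sum_coeff_le [CompleteSpace Y] :
    ∃ C, ∀ (y : Y) (n : ℕ), ‖∑ i ∈ range n, hb.coeff y i • e i‖ ≤ C * ‖y‖ := by
  have : CompleteSpace (partialSumSubmodule e) :=
    isClosed_partialSumSubmodule.completeSpace_coe
  let L : partialSumSubmodule e →L[ℝ] Y :=
    (ContinuousMap.evalCLM ℝ OnePoint.infty).comp (partialSumSubmodule e).subtypeL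
  let S (y : Y) : partialSumSubmodule e := ⟨hb.partialSums y, hb.partialSums_mem y⟩
  have hL : ∀ y, L (S y) = y := hb.partialSums_infty
  have hker : L.ker = ⊥ := LinearMap.ker_eq_bot.2 fun g g' h => Subtype.ext <| by
    rw [hb.eq_partialSums g.2, hb.eq_partialSums g'.2]
    exact congrArg hb.partialSums h
  have hrange : L.range = ⊤ := LinearMap.range_eq_top.2 fun y => ⟨_, hL y⟩
  let T := ContinuousLinearEquiv.ofBijective L hker hrange
  refine ⟨‖(T.symm : Y →L[ℝ] partialSumSubmodule e)‖, fun y n => ?_⟩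
  have hT : T.symm y = S y := T.symm_apply_eq.2 (hL y).symm
  calc ‖∑ i ∈ range n, hb.coeff y i • e i‖
      = ‖(T.symm y : C(OnePoint ℕ, Y)) n‖ := by rw [hT, hb.partialSums_apply]
    _ ≤ ‖T.symm y‖ := ContinuousMap.norm_coe_le_norm _ _
    _ ≤ _ := (T.symm : Y →L[ℝ] partialSumSubmodule e).le_opNorm y

end OpenMapping

section Constants

variable {Y : Type*} [NormedAddCommGroup Y] [NormedSpace ℝ Y] {e : ℕ → Y}

def basisBounds (e : ℕ → Y) : Set ℝ :=
  {C : ℝ | 0 ≤ C ∧ ∀ (a : ℕ → ℝ) (m n : ℕ), m ≤ n →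
    ‖∑ i ∈ range m, a i • e i‖ ≤ C * ‖∑ i ∈ range n, a i • e i‖}

def unconditionalBounds (e : ℕ → Y) : Set ℝ :=
  {C : ℝ | 0 ≤ C ∧ ∀ (a ε : ℕ → ℝ) (s : Finset ℕ), (∀ i, ε i = 1 ∨ ε i = -1) →
    ‖∑ i ∈ s, (ε i * a i) • e i‖ ≤ C * ‖∑ i ∈ s, a i • e i‖}

theorem basisConstant_eq_sInf : basisConstant e = sInf (basisBounds e) := rfl

theorem unconditionalConstant_eq_sInf : unconditionalConstant e = sInf (unconditionalBounds e) :=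
  rfl

variable [CompleteSpace Y]

theorem IsSchauderBasis.continuous_coeff (hb : IsSchauderBasis e) (i : ℕ) :
    Continuous fun y => hb.coeff y i := by
  obtain ⟨C, hC⟩ := hb.exists_norm_sum_coeff_le
  refine AddMonoidHomClass.continuous_of_bound (hb.coeffₗ i) (2 * C / ‖e i‖) fun y => ?_
  rw [div_mul_eq_mul_div, le_div_iff₀ (norm_pos_iff.2 (hb.ne_zero i))]
  calc ‖hb.coeffₗ i y‖ * ‖e i‖ = ‖hb.coeff y i • e i‖ := (norm_smul _ _).symm
    _ = ‖∑ j ∈ range (i + 1), hb.coeff y j • e j - ∑ j ∈ range i, hb.coeff y j • e j‖ := by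
      rw [sum_range_succ, add_sub_cancel_left]
    _ ≤ C * ‖y‖ + C * ‖y‖ := (norm_sub_le _ _).trans (add_le_add (hC y _) (hC y _))
    _ = 2 * C * ‖y‖ := by ring

theorem IsSchauderBasis.basisBounds_nonempty (hb : IsSchauderBasis e) :
    (basisBounds e).Nonempty := by
  obtain ⟨C, hC⟩ := hb.exists_norm_sum_coeff_le
  refine ⟨max C 0, le_max_right _ _, fun a m n hmn => ?_⟩
  have hm := hC (∑ i ∈ range n, a i • e i) m
  rw [hb.coeff_sum] at hm
  calc ‖∑ i ∈ range m, a i • e i‖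
      = ‖∑ i ∈ range m, (if i ∈ range n then a i else 0) • e i‖ := by
        refine congrArg _ (sum_congr rfl fun i hi => ?_)
        rw [if_pos (mem_range.2 ((mem_range.1 hi).trans_le hmn))]
    _ ≤ C * ‖∑ i ∈ range n, a i • e i‖ := hm
    _ ≤ max C 0 * ‖∑ i ∈ range n, a i • e i‖ := by gcongr; exact le_max_left _ _

noncomputable def IsUnconditionalSchauderBasis.toUnconditionalSchauderBasis
    (hb : IsUnconditionalSchauderBasis e) : UnconditionalSchauderBasis ℕ ℝ Y where
  basis := e
  coord i := ⟨hb.1.coeffₗ i, hb.1.continuous_coeff i⟩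
  ortho i j := by
    change hb.1.coeff (e j) i = _
    simp [hb.1.coeff_basis, Pi.single_apply]
  expansion y := by
    have hs := (hb.2 _ y (hb.1.tendsto_coeff y)).hasSum
    rwa [tendsto_nhds_unique hs.tendsto_sum_nat (hb.1.tendsto_coeff y)] at hs

theorem IsUnconditionalSchauderBasis.exists_norm_sum_filter_le
    (hb : IsUnconditionalSchauderBasis e) :
    ∃ C, 0 ≤ C ∧ ∀ (a : ℕ → ℝ) (s : Finset ℕ) (p : ℕ → Prop) [DecidablePred p],
      ‖∑ i ∈ s with p i, a i • e i‖ ≤ C * ‖∑ i ∈ s, a i • e i‖ := by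
  let b := hb.toUnconditionalSchauderBasis
  obtain ⟨C, hC⟩ := b.exists_norm_proj_le
  refine ⟨C, (norm_nonneg _).trans (hC ∅), fun a s p _ => ?_⟩
  have hbasis (i : ℕ) : b.proj (s.filter p) (e i) = if i ∈ s.filter p then e i else 0 :=
    by convert b.proj_apply_basis_mem _ i <;> rfl
  have hproj : b.proj (s.filter p) (∑ i ∈ s, a i • e i) = ∑ i ∈ s with p i, a i • e i := by
    simp only [map_sum, map_smul, hbasis, smul_ite, smul_zero, sum_filter]
    exact sum_congr rfl fun i hi => by simp [hi]
  rw [← hproj]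
  exact (b.proj _).le_of_opNorm_le (hC _) _

theorem IsUnconditionalSchauderBasis.unconditionalBounds_nonempty
    (hb : IsUnconditionalSchauderBasis e) : (unconditionalBounds e).Nonempty := by
  obtain ⟨C, hC0, hC⟩ := hb.exists_norm_sum_filter_le
  refine ⟨2 * C + 1, by positivity, fun a ε s hε => ?_⟩
  have hsign : ∑ i ∈ s, (ε i * a i) • e i =
      (2 : ℝ) • ∑ i ∈ s with ε i = 1, a i • e i - ∑ i ∈ s, a i • e i := by
    rw [sum_filter, smul_sum, ← sum_sub_distrib]
    refine sum_congr rfl fun i _ => ?_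
    rcases hε i with h | h
    · simp [h, two_smul]
    · rw [h, if_neg (by norm_num)]
      module
  rw [hsign]
  calc _ ≤ ‖(2 : ℝ) • ∑ i ∈ s with ε i = 1, a i • e i‖ + ‖∑ i ∈ s, a i • e i‖ := norm_sub_le _ _
    _ ≤ 2 * (C * ‖∑ i ∈ s, a i • e i‖) + ‖∑ i ∈ s, a i • e i‖ := by
      rw [norm_smul, Real.norm_two]
      gcongr
      exact hC a s _
    _ = (2 * C + 1) * ‖∑ i ∈ s, a i • e i‖ := by ring

end Constants

section Grid

variable {Y : Type*} [NormedAddCommGroup Y] [NormedSpace ℝ Y] {e : ℕ → Y}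

noncomputable def gridPoint (e : ℕ → Y) (c : ℕ →₀ ℤ) : Y := c.sum fun i z => (z : ℝ) • e i

theorem gridPoint_eq_sum {c : ℕ →₀ ℤ} {s : Finset ℕ} (h : c.support ⊆ s) :
    gridPoint e c = ∑ i ∈ s, (c i : ℝ) • e i :=
  Finsupp.sum_of_support_subset c h _ fun i _ => by simp

theorem gridPoint_sub (c d : ℕ →₀ ℤ) : gridPoint e (c - d) = gridPoint e c - gridPoint e d :=
  Finsupp.sum_sub_index fun i a b => by rw [Int.cast_sub, sub_smul]

theorem gridPoint_single (i : ℕ) (z : ℤ) : gridPoint e (Finsupp.single i z) = (z : ℝ) • e i := by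
  simp [gridPoint]

theorem tendsto_sum_range_gridPoint (c : ℕ →₀ ℤ) :
    Tendsto (fun n => ∑ i ∈ range n, (c i : ℝ) • e i) atTop (𝓝 (gridPoint e c)) := by
  obtain ⟨N, hN⟩ := c.support.exists_nat_subset_range
  refine tendsto_const_nhds.congr' ?_
  filter_upwards [eventually_ge_atTop N] with n hn
  exact gridPoint_eq_sum (hN.trans (range_subset_range.2 hn))

theorem gridPoint_mem_integerGrid (c : ℕ →₀ ℤ) : gridPoint e c ∈ integerGrid e :=
  ⟨c, tendsto_sum_range_gridPoint c⟩

theorem IsSchauderBasis.gridPoint_injective (hb : IsSchauderBasis e) :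
    Function.Injective (gridPoint e) := fun c d h => by
  have hc := hb.coeff_eq (tendsto_sum_range_gridPoint (e := e) c)
  have hd := hb.coeff_eq (tendsto_sum_range_gridPoint (e := e) d)
  rw [h] at hc
  ext i
  exact_mod_cast congrFun (hc.symm.trans hd) i

/-- Normalization forces the integer coefficients of a convergent expansion to vanish
eventually. -/
theorem exists_gridPoint_eq (hnorm : ∀ i, ‖e i‖ = 1) {x : Y} (hx : x ∈ integerGrid e) :
    ∃ c, gridPoint e c = x := by
  obtain ⟨a, ha⟩ := hx
  have hterm : Tendsto (fun i => ‖(a i : ℝ) • e i‖) atTop (𝓝 0) := by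
    simpa [sum_range_succ] using ((ha.comp (tendsto_add_atTop_nat 1)).sub ha).norm
  have hzero : ∀ᶠ i in cofinite, a i = 0 := by
    rw [Nat.cofinite_eq_atTop]
    filter_upwards [hterm.eventually (gt_mem_nhds one_pos)] with i hi
    rw [norm_smul, hnorm, mul_one, Real.norm_eq_abs, ← Int.cast_abs] at hi
    exact Int.abs_lt_one_iff.1 (by exact_mod_cast hi)
  let c := Finsupp.ofSupportFinite a (eventually_cofinite.1 hzero)
  exact ⟨c, tendsto_nhds_unique (tendsto_sum_range_gridPoint c) ha⟩

noncomputable def gridEquiv (hnorm : ∀ i, ‖e i‖ = 1) (hb : IsSchauderBasis e) :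
    (ℕ →₀ ℤ) ≃ integerGrid e :=
  Equiv.ofBijective (fun c => ⟨gridPoint e c, gridPoint_mem_integerGrid c⟩)
    ⟨fun _ _ h => hb.gridPoint_injective (congrArg Subtype.val h),
      fun x => (exists_gridPoint_eq hnorm x.2).imp fun _ hc => Subtype.ext hc⟩

theorem coe_gridEquiv (hnorm : ∀ i, ‖e i‖ = 1) (hb : IsSchauderBasis e) (c : ℕ →₀ ℤ) :
    (gridEquiv hnorm hb c : Y) = gridPoint e c :=
  rfl

theorem one_le_two_mul_norm_gridPoint (hnorm : ∀ i, ‖e i‖ = 1) {C : ℝ} (hC : C ∈ basisBounds e)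
    {c : ℕ →₀ ℤ} (hc : c ≠ 0) : 1 ≤ 2 * C * ‖gridPoint e c‖ := by
  obtain ⟨i, hi⟩ := Finsupp.ne_iff.1 hc
  obtain ⟨n, hn⟩ := c.support.exists_nat_subset_range
  have hin : i < n := mem_range.1 (hn (Finsupp.mem_support_iff.2 hi))
  have hS : ∀ m ≤ n, ‖∑ j ∈ range m, (c j : ℝ) • e j‖ ≤ C * ‖gridPoint e c‖ := fun m hm => by
    rw [gridPoint_eq_sum hn]
    exact hC.2 _ m n hm
  calc (1 : ℝ) ≤ |(c i : ℝ)| := by exact_mod_cast Int.one_le_abs hi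
    _ = ‖∑ j ∈ range (i + 1), (c j : ℝ) • e j - ∑ j ∈ range i, (c j : ℝ) • e j‖ := by
      rw [sum_range_succ, add_sub_cancel_left, norm_smul, hnorm, mul_one, Real.norm_eq_abs]
    _ ≤ C * ‖gridPoint e c‖ + C * ‖gridPoint e c‖ :=
      (norm_sub_le _ _).trans (add_le_add (hS _ hin) (hS _ hin.le))
    _ = 2 * C * ‖gridPoint e c‖ := by ring

theorem isClosed_integerGrid (hnorm : ∀ i, ‖e i‖ = 1) (hB : (basisBounds e).Nonempty) :
    IsClosed (integerGrid e) := by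
  obtain ⟨C, hC⟩ := hB
  have hC0 : 0 < C := by
    have := one_le_two_mul_norm_gridPoint hnorm hC (c := Finsupp.single 0 1)
      (Finsupp.single_ne_zero.2 one_ne_zero)
    rw [gridPoint_single, Int.cast_one, one_smul, hnorm] at this
    linarith
  refine Metric.isClosed_of_pairwise_le_dist (ε := 1 / (2 * C)) (by positivity) ?_
  rintro x hx y hy hxy
  obtain ⟨c, rfl⟩ := exists_gridPoint_eq hnorm hx
  obtain ⟨d, rfl⟩ := exists_gridPoint_eq hnorm hy
  have hcd : c - d ≠ 0 := sub_ne_zero.2 fun h => hxy (h ▸ rfl)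
  rw [dist_eq_norm, ← gridPoint_sub, div_le_iff₀' (by positivity)]
  exact one_le_two_mul_norm_gridPoint hnorm hC hcd

theorem norm_add_smul_le_max (u v : Y) {θ : ℝ} (hθ : |θ| ≤ 1) :
    ‖u + θ • v‖ ≤ max ‖u + v‖ ‖u - v‖ := by
  obtain ⟨h₁, h₂⟩ := abs_le.1 hθ
  refine (convexOn_norm convex_univ).le_max_of_mem_segment (Set.mem_univ _) (Set.mem_univ _)
    ⟨(1 + θ) / 2, (1 - θ) / 2, by linarith, by linarith, by ring, by module⟩

/-- The convex function `θ ↦ ‖w + ∑ θᵢ xᵢ‖` attains its maximum on the cube `[-1, 1]^s` at a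
vertex. -/
theorem exists_sign_norm_add_sum_le (x : ℕ → Y) (θ : ℕ → ℝ) (s : Finset ℕ)
    (hθ : ∀ i ∈ s, |θ i| ≤ 1) (w : Y) : ∃ ε : ℕ → ℝ, (∀ i, ε i = 1 ∨ ε i = -1) ∧
      ‖w + ∑ i ∈ s, θ i • x i‖ ≤ ‖w + ∑ i ∈ s, ε i • x i‖ := by
  induction s using Finset.induction_on generalizing w with
  | empty => exact ⟨fun _ => 1, fun _ => Or.inl rfl, by simp⟩
  | @insert j s hj ih =>
    obtain ⟨ε, hε, hle⟩ := ih (fun i hi => hθ i (mem_insert_of_mem hi)) (w + θ j • x j)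
    set u := w + ∑ i ∈ s, ε i • x i with hu
    obtain ⟨σ, hσ, hmax⟩ : ∃ σ : ℝ, (σ = 1 ∨ σ = -1) ∧ max ‖u + x j‖ ‖u - x j‖ = ‖u + σ • x j‖ := by
      rcases le_total ‖u + x j‖ ‖u - x j‖ with h | h
      · exact ⟨-1, Or.inr rfl, by rw [max_eq_right h, neg_one_smul, ← sub_eq_add_neg]⟩
      · exact ⟨1, Or.inl rfl, by rw [max_eq_left h, one_smul]⟩
    have hsum : ∑ i ∈ s, Function.update ε j σ i • x i = ∑ i ∈ s, ε i • x i :=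
      sum_congr rfl fun i hi => by rw [Function.update_of_ne (ne_of_mem_of_not_mem hi hj)]
    refine ⟨Function.update ε j σ, fun i => ?_, ?_⟩
    · rcases eq_or_ne i j with rfl | hi
      · simpa using hσ
      · simpa [hi] using hε i
    rw [sum_insert hj, sum_insert hj, Function.update_self, hsum]
    calc ‖w + (θ j • x j + ∑ i ∈ s, θ i • x i)‖ = ‖w + θ j • x j + ∑ i ∈ s, θ i • x i‖ := by
          rw [add_assoc]
      _ ≤ ‖u + θ j • x j‖ := hle.trans_eq (by rw [hu]; congr 1; abel)
      _ ≤ ‖u + σ • x j‖ :=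
          (norm_add_smul_le_max u (x j) (hθ j (mem_insert_self j s))).trans_eq hmax
      _ = ‖w + (σ • x j + ∑ i ∈ s, ε i • x i)‖ := by rw [hu]; congr 1; abel

theorem norm_gridPoint_le_of_abs_le {C : ℝ} (hC : C ∈ unconditionalBounds e) {u v : ℕ →₀ ℤ}
    (huv : ∀ i, |u i| ≤ |v i|) : ‖gridPoint e u‖ ≤ C * ‖gridPoint e v‖ := by
  have hsupp : u.support ⊆ v.support := fun i hi => by
    rw [Finsupp.mem_support_iff] at hi ⊢
    intro hv
    have := huv i
    rw [hv, abs_zero] at this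
    exact hi (abs_nonpos_iff.1 this)
  have hθ : ∀ i ∈ v.support, |(u i : ℝ) / v i| ≤ 1 := fun i hi => by
    rw [abs_div, div_le_one (abs_pos.2 (Int.cast_ne_zero.2 (Finsupp.mem_support_iff.1 hi)))]
    exact_mod_cast huv i
  obtain ⟨ε, hε, hle⟩ :=
    exists_sign_norm_add_sum_le (fun i => (v i : ℝ) • e i) _ v.support hθ 0
  rw [zero_add, zero_add] at hle
  rw [gridPoint_eq_sum hsupp, gridPoint_eq_sum subset_rfl]
  calc ‖∑ i ∈ v.support, (u i : ℝ) • e i‖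
      = ‖∑ i ∈ v.support, ((u i : ℝ) / v i) • (v i : ℝ) • e i‖ := by
        congr 1
        refine sum_congr rfl fun i hi => ?_
        rw [smul_smul, div_mul_cancel₀ _ (Int.cast_ne_zero.2 (Finsupp.mem_support_iff.1 hi))]
    _ ≤ ‖∑ i ∈ v.support, (ε i * v i) • e i‖ := by simpa only [smul_smul] using hle
    _ ≤ C * ‖∑ i ∈ v.support, (v i : ℝ) • e i‖ := hC.2 _ ε _ hε

end Grid

section Boxes

noncomputable def clampBox (b c : ℕ →₀ ℤ) : ℕ →₀ ℤ := -b ⊔ (c ⊓ b)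

theorem clampBox_apply (b c : ℕ →₀ ℤ) (i : ℕ) :
    clampBox b c i = max (-b i) (min (c i) (b i)) := by
  simp [clampBox]

theorem clampBox_mem {b : ℕ →₀ ℤ} (hb : 0 ≤ b) (c : ℕ →₀ ℤ) : clampBox b c ∈ Set.Icc (-b) b := by
  have h (i : ℕ) : -b i ≤ clampBox b c i ∧ clampBox b c i ≤ b i := by
    have := hb i
    rw [clampBox_apply]
    simp only [Finsupp.coe_zero, Pi.zero_apply] at this
    omega
  exact ⟨fun i => (h i).1, fun i => (h i).2⟩

theorem clampBox_of_mem {b c : ℕ →₀ ℤ} (hc : c ∈ Set.Icc (-b) b) : clampBox b c = c := by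
  ext i
  have h₁ := hc.1 i
  have h₂ := hc.2 i
  simp only [clampBox_apply, Finsupp.neg_apply] at *
  omega

theorem clampBox_clampBox {b d : ℕ →₀ ℤ} (hbd : b ≤ d) (c : ℕ →₀ ℤ) :
    clampBox b (clampBox d c) = clampBox b c := by
  ext i
  have := hbd i
  simp only [clampBox_apply]
  omega

theorem abs_clampBox_sub_le (b c d : ℕ →₀ ℤ) (i : ℕ) :
    |(clampBox b c - clampBox b d) i| ≤ |(c - d) i| := by
  simp only [Finsupp.sub_apply, clampBox_apply]
  rw [abs_le]
  rcases abs_cases (c i - d i) with h | h <;> omega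

theorem exists_sub_clampBox_eq_single {b b' : ℕ →₀ ℤ} {i : ℕ}
    (hb' : b' ≤ b + Finsupp.single i 1) {c : ℕ →₀ ℤ} (hc : c ∈ Set.Icc (-b') b') :
    ∃ k : ℤ, |k| ≤ 1 ∧ c - clampBox b c = Finsupp.single i k := by
  refine ⟨(c - clampBox b c) i, ?_, ?_⟩
  · have h₁ := hc.1 i
    have h₂ := hc.2 i
    have h₃ := hb' i
    simp only [Finsupp.sub_apply, clampBox_apply, Finsupp.neg_apply, Finsupp.add_apply,
      Finsupp.single_eq_same] at *
    rw [abs_le]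
    omega
  · ext j
    rcases eq_or_ne j i with rfl | hj
    · simp
    have h₁ := hc.1 j
    have h₂ := hc.2 j
    have h₃ := hb' j
    simp only [Finsupp.sub_apply, clampBox_apply, Finsupp.neg_apply, Finsupp.add_apply,
      Finsupp.single_eq_of_ne hj, add_zero] at *
    omega

variable (b b' : ℕ →₀ ℤ) (S : Set (ℕ →₀ ℤ))

open Classical in
noncomputable def boxRetract (c : ℕ →₀ ℤ) : ℕ →₀ ℤ :=
  if clampBox b' c ∈ S then clampBox b' c else clampBox b c

theorem boxRetract_eq_or (c : ℕ →₀ ℤ) :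
    boxRetract b b' S c = clampBox b' c ∨ boxRetract b b' S c = clampBox b c := by
  unfold boxRetract
  split_ifs <;> simp

variable {b b' S}

theorem boxRetract_mem (hb : 0 ≤ b) (hbS : Set.Icc (-b) b ⊆ S) (c : ℕ →₀ ℤ) :
    boxRetract b b' S c ∈ S := by
  unfold boxRetract
  split_ifs with h
  exacts [h, hbS (clampBox_mem hb c)]

theorem boxRetract_of_mem (hSb' : S ⊆ Set.Icc (-b') b') {c : ℕ →₀ ℤ} (hc : c ∈ S) :
    boxRetract b b' S c = c := by
  rw [boxRetract, clampBox_of_mem (hSb' hc), if_pos hc]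

theorem boxRetract_clampBox {d : ℕ →₀ ℤ} (hbd : b ≤ d) (hb'd : b' ≤ d) (c : ℕ →₀ ℤ) :
    boxRetract b b' S (clampBox d c) = boxRetract b b' S c := by
  unfold boxRetract
  rw [clampBox_clampBox hb'd, clampBox_clampBox hbd]

theorem boxRetract_boxRetract_of_le {b₂ b₂' : ℕ →₀ ℤ} {S₂ : Set (ℕ →₀ ℤ)} (hbb' : b ≤ b')
    (hb'b₂ : b' ≤ b₂) (hb₂ : b₂ ≤ b₂') (c : ℕ →₀ ℤ) :
    boxRetract b b' S (boxRetract b₂ b₂' S₂ c) = boxRetract b b' S c := by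
  rcases boxRetract_eq_or b₂ b₂' S₂ c with h | h <;> rw [h]
  · exact boxRetract_clampBox (hbb'.trans (hb'b₂.trans hb₂)) (hb'b₂.trans hb₂) c
  · exact boxRetract_clampBox (hbb'.trans hb'b₂) hb'b₂ c

theorem boxRetract_boxRetract_of_subset {S₂ : Set (ℕ →₀ ℤ)} (hb : 0 ≤ b) (hbb' : b ≤ b')
    (hbS : Set.Icc (-b) b ⊆ S) (hS : S ⊆ S₂) (c : ℕ →₀ ℤ) :
    boxRetract b b' S (boxRetract b b' S₂ c) = boxRetract b b' S c := by
  by_cases h : clampBox b' c ∈ S₂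
  · rw [show boxRetract b b' S₂ c = clampBox b' c from if_pos h, boxRetract_clampBox hbb' le_rfl]
  · have hc : clampBox b c ∈ Set.Icc (-b') b' :=
      Set.Icc_subset_Icc (neg_le_neg hbb') hbb' (clampBox_mem hb c)
    rw [show boxRetract b b' S₂ c = clampBox b c from if_neg h,
      show boxRetract b b' S c = clampBox b c from if_neg fun h' => h (hS h')]
    simp [boxRetract, clampBox_of_mem hc, hbS (clampBox_mem hb c)]

end Boxes

section BoxRetractLipschitz

variable {Y : Type*} [NormedAddCommGroup Y] [NormedSpace ℝ Y] {e : ℕ → Y}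

theorem norm_gridPoint_clampBox_sub_le {C : ℝ} (hC : C ∈ unconditionalBounds e)
    (b x y : ℕ →₀ ℤ) :
    ‖gridPoint e (clampBox b x) - gridPoint e (clampBox b y)‖ ≤
      C * ‖gridPoint e x - gridPoint e y‖ := by
  rw [← gridPoint_sub, ← gridPoint_sub]
  exact norm_gridPoint_le_of_abs_le hC (abs_clampBox_sub_le b x y)

theorem norm_gridPoint_sub_clampBox_le_one (hnorm : ∀ i, ‖e i‖ = 1) {b b' : ℕ →₀ ℤ} {i : ℕ}
    (hb' : b' ≤ b + Finsupp.single i 1) {c : ℕ →₀ ℤ} (hc : c ∈ Set.Icc (-b') b') :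
    ‖gridPoint e c - gridPoint e (clampBox b c)‖ ≤ 1 := by
  obtain ⟨k, hk, hck⟩ := exists_sub_clampBox_eq_single hb' hc
  rw [← gridPoint_sub, hck, gridPoint_single, norm_smul, hnorm, mul_one, Real.norm_eq_abs]
  exact_mod_cast hk

/-- Grid points are `1 / (2 Cb)`-separated, so the unit jump between the two boxes costs at most
`2 Cb` times the distance. -/
theorem norm_gridPoint_boxRetract_sub_le (hnorm : ∀ i, ‖e i‖ = 1) {Cu Cb : ℝ}
    (hCu : Cu ∈ unconditionalBounds e) (hCb : Cb ∈ basisBounds e) {b b' : ℕ →₀ ℤ}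
    {S : Set (ℕ →₀ ℤ)} (hbb' : b ≤ b')
    (hstep : ∀ c ∈ S, ‖gridPoint e c - gridPoint e (clampBox b c)‖ ≤ 1) (x y : ℕ →₀ ℤ) :
    ‖gridPoint e (boxRetract b b' S x) - gridPoint e (boxRetract b b' S y)‖ ≤
      (Cu + 2 * Cb) * ‖gridPoint e x - gridPoint e y‖ := by
  have hsame : ∀ d u v : ℕ →₀ ℤ, ‖gridPoint e (clampBox d u) - gridPoint e (clampBox d v)‖ ≤
      (Cu + 2 * Cb) * ‖gridPoint e u - gridPoint e v‖ := fun d u v =>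
    (norm_gridPoint_clampBox_sub_le hCu d u v).trans
      (mul_le_mul_of_nonneg_right (by linarith [hCb.1]) (norm_nonneg _))
  have hmixed : ∀ u v, clampBox b' u ∈ S → clampBox b' v ∉ S →
      ‖gridPoint e (clampBox b' u) - gridPoint e (clampBox b v)‖ ≤
        (Cu + 2 * Cb) * ‖gridPoint e u - gridPoint e v‖ := by
    intro u v hu hv
    have huv : u ≠ v := by rintro rfl; exact hv hu
    have hjump := hstep _ hu
    rw [clampBox_clampBox hbb'] at hjump
    have hsep : 1 ≤ 2 * Cb * ‖gridPoint e u - gridPoint e v‖ := by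
      rw [← gridPoint_sub]
      exact one_le_two_mul_norm_gridPoint hnorm hCb (sub_ne_zero.2 huv)
    calc _ ≤ ‖gridPoint e (clampBox b' u) - gridPoint e (clampBox b u)‖ +
          ‖gridPoint e (clampBox b u) - gridPoint e (clampBox b v)‖ :=
          norm_sub_le_norm_sub_add_norm_sub _ _ _
      _ ≤ 1 + Cu * ‖gridPoint e u - gridPoint e v‖ :=
          add_le_add hjump (norm_gridPoint_clampBox_sub_le hCu b u v)
      _ ≤ _ := by linarith
  unfold boxRetract
  split_ifs with hx hy hy
  · exact hsame b' x y
  · exact hmixed x y hx hy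
  · rw [norm_sub_rev, norm_sub_rev (gridPoint e x)]
    exact hmixed y x hy hx
  · exact hsame b x y

end BoxRetractLipschitz

section Schedule

theorem mem_Icc_neg_iff_abs_le {b c : ℕ →₀ ℤ} : c ∈ Set.Icc (-b) b ↔ ∀ i, |c i| ≤ b i := by
  simp [Finsupp.le_def, abs_le, forall_and]

/-- Boxes growing by one unit in one coordinate at a time: coordinate `i` is enlarged at the steps
`Nat.pair i m`. -/
noncomputable def boxSeq (t : ℕ) : ℕ →₀ ℤ := ∑ s ∈ range t, Finsupp.single s.unpair.1 1

theorem boxSeq_zero : boxSeq 0 = 0 := sum_range_zero _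

theorem boxSeq_succ (t : ℕ) : boxSeq (t + 1) = boxSeq t + Finsupp.single t.unpair.1 1 :=
  sum_range_succ _ _

theorem boxSeq_nonneg (t : ℕ) : 0 ≤ boxSeq t :=
  sum_nonneg fun _ _ => Finsupp.single_nonneg.2 zero_le_one

theorem boxSeq_mono : Monotone boxSeq :=
  monotone_nat_of_le_succ fun t => by
    rw [boxSeq_succ]
    exact le_add_of_nonneg_right (Finsupp.single_nonneg.2 zero_le_one)

theorem boxSeq_le_pred_add_single (t : ℕ) :
    boxSeq t ≤ boxSeq (t - 1) + Finsupp.single (t - 1).unpair.1 1 := by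
  cases t with
  | zero => simp [boxSeq_zero]
  | succ t => exact (boxSeq_succ t).le

theorem le_boxSeq_pair (i m : ℕ) : (m : ℤ) ≤ boxSeq (Nat.pair i m) i := by
  induction m with
  | zero => exact boxSeq_nonneg _ i
  | succ m ih =>
    calc ((m + 1 : ℕ) : ℤ) ≤ boxSeq (Nat.pair i m + 1) i := by
          rw [boxSeq_succ, Finsupp.add_apply, Nat.unpair_pair, Finsupp.single_eq_same]
          push_cast
          linarith
      _ ≤ boxSeq (Nat.pair i (m + 1)) i := boxSeq_mono (Nat.pair_lt_pair_right i m.lt_succ_self) i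

theorem exists_mem_Icc_boxSeq (c : ℕ →₀ ℤ) : ∃ t, c ∈ Set.Icc (-boxSeq t) (boxSeq t) := by
  have hev : ∀ i ∈ c.support, ∀ᶠ t in atTop, |c i| ≤ boxSeq t i := fun i _ =>
    eventually_atTop.2 ⟨Nat.pair i (c i).natAbs, fun t ht => by
      rw [Int.abs_eq_natAbs]
      exact (le_boxSeq_pair i _).trans (boxSeq_mono ht i)⟩
  obtain ⟨t, ht⟩ := (c.support.eventually_all.2 hev).exists
  refine ⟨t, mem_Icc_neg_iff_abs_le.2 fun i => ?_⟩
  by_cases hi : i ∈ c.support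
  · exact ht i hi
  · rw [Finsupp.notMem_support_iff.1 hi, abs_zero]
    exact boxSeq_nonneg t i

open Classical in
noncomputable def boxLevel (c : ℕ →₀ ℤ) : ℕ := Nat.find (exists_mem_Icc_boxSeq c)

open Classical in
theorem mem_Icc_boxSeq_iff {c : ℕ →₀ ℤ} {t : ℕ} :
    c ∈ Set.Icc (-boxSeq t) (boxSeq t) ↔ boxLevel c ≤ t := by
  refine ⟨fun h => Nat.find_min' (exists_mem_Icc_boxSeq c) h, fun h => ?_⟩
  exact Set.Icc_subset_Icc (neg_le_neg (boxSeq_mono h)) (boxSeq_mono h)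
    (Nat.find_spec (exists_mem_Icc_boxSeq c))

theorem boxLevel_eq_zero {c : ℕ →₀ ℤ} : boxLevel c = 0 ↔ c = 0 := by
  rw [← Nat.le_zero, ← mem_Icc_boxSeq_iff, boxSeq_zero, neg_zero, Set.Icc_self,
    Set.mem_singleton_iff]

theorem finite_boxLevel_preimage (t : ℕ) : (boxLevel ⁻¹' {t}).Finite :=
  (Set.finite_Icc _ _).subset fun _ hc => mem_Icc_boxSeq_iff.2 (le_of_eq hc)

end Schedule

section Enumeration

variable {α : Type*} (f : α → ℕ)

theorem exists_injective_nat_lt_of_lt (hf : ∀ t, (f ⁻¹' {t}).Finite) :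
    ∃ κ : α → ℕ, Function.Injective κ ∧ ∀ a b, f a < f b → κ a < κ b := by
  have : Countable α := by
    have huniv : (Set.univ : Set α) = ⋃ t, f ⁻¹' {t} := by ext; simp
    exact Set.countable_univ_iff.1 (huniv ▸ Set.countable_iUnion fun t => (hf t).countable)
  obtain ⟨enc, henc⟩ := exists_injective_nat α
  -- `κ a = G (f a) + enc a`, where the blocks `[G t, G (t + 1))` are long enough for level `t`
  let M (t : ℕ) : ℕ := (hf t).toFinset.sup enc
  let G (t : ℕ) : ℕ := ∑ s ∈ range t, (M s + 1)
  have hM : ∀ a, enc a ≤ M (f a) := fun a => le_sup ((hf _).mem_toFinset.2 rfl)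
  have hG : ∀ {s t}, s < t → G s + M s < G t := fun {s t} hst =>
    calc G s + M s < G (s + 1) := by simp [G, sum_range_succ]
      _ ≤ G t := sum_le_sum_of_subset (range_subset_range.2 hst)
  have hlt : ∀ a b, f a < f b → G (f a) + enc a < G (f b) + enc b := fun a b h =>
    (Nat.add_le_add_left (hM a) _).trans_lt ((hG h).trans_le (Nat.le_add_right _ _))
  refine ⟨fun a => G (f a) + enc a, fun a b hab => ?_, hlt⟩
  rcases lt_trichotomy (f a) (f b) with h | h | h
  · exact absurd hab (hlt a b h).ne
  · simp only [h, Nat.add_left_cancel_iff] at hab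
    exact henc hab
  · exact absurd hab (hlt b a h).ne'

theorem exists_bijective_monotone_comp [Infinite α] (hf : ∀ t, (f ⁻¹' {t}).Finite) :
    ∃ μ : ℕ → α, Function.Bijective μ ∧ Monotone (f ∘ μ) := by
  obtain ⟨κ, hκ, hlt⟩ := exists_injective_nat_lt_of_lt f hf
  have : Infinite (Set.range κ) := (Set.infinite_range_of_injective hκ).to_subtype
  let ι := Nat.Subtype.orderIsoOfNat (Set.range κ)
  let μ (n : ℕ) : α := (Equiv.ofInjective κ hκ).symm (ι n)
  have hκμ : ∀ n, κ (μ n) = ι n := fun n => Equiv.apply_ofInjective_symm hκ _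
  refine ⟨μ, (Equiv.ofInjective κ hκ).symm.bijective.comp ι.bijective, fun j n hjn => ?_⟩
  by_contra! h
  have := hlt _ _ h
  rw [hκμ, hκμ, Subtype.coe_lt_coe, ι.lt_iff_lt] at this
  exact absurd hjn (not_le.2 this)

end Enumeration

section Stages

variable (μ : ℕ → ℕ →₀ ℤ)

/-- If `μ n` has level `t`, then `{μ 0, …, μ n}` lies between the boxes `t - 1` and `t` (when
`t = 0`, both are `{0}` since `0 - 1 = 0` in `ℕ`). -/
noncomputable def stageRetract (n : ℕ) : (ℕ →₀ ℤ) → ℕ →₀ ℤ :=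
  boxRetract (boxSeq (boxLevel (μ n) - 1)) (boxSeq (boxLevel (μ n))) (μ '' Set.Iic n)

variable {μ} (hmono : Monotone (boxLevel ∘ μ))
include hmono

theorem image_Iic_subset_Icc_boxSeq (n : ℕ) :
    μ '' Set.Iic n ⊆ Set.Icc (-boxSeq (boxLevel (μ n))) (boxSeq (boxLevel (μ n))) := by
  rintro _ ⟨j, hj, rfl⟩
  exact mem_Icc_boxSeq_iff.2 (hmono hj)

theorem Icc_boxSeq_subset_image_Iic (hμ : Function.Surjective μ) (n : ℕ) :
    Set.Icc (-boxSeq (boxLevel (μ n) - 1)) (boxSeq (boxLevel (μ n) - 1)) ⊆ μ '' Set.Iic n := by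
  intro c hc
  obtain ⟨j, rfl⟩ := hμ c
  by_cases hjn : j ≤ n
  · exact ⟨j, hjn, rfl⟩
  -- otherwise both levels vanish, and the only point of level `0` is `0`
  have hj := mem_Icc_boxSeq_iff.1 hc
  have hnj : boxLevel (μ n) ≤ boxLevel (μ j) := hmono (not_le.1 hjn).le
  have hn0 : boxLevel (μ n) = 0 := by omega
  have hj0 : boxLevel (μ j) = 0 := by omega
  rw [boxLevel_eq_zero] at hn0 hj0
  exact ⟨n, Set.mem_Iic.2 le_rfl, hn0.trans hj0.symm⟩

theorem stageRetract_of_mem {n : ℕ} {c : ℕ →₀ ℤ} (hc : c ∈ μ '' Set.Iic n) :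
    stageRetract μ n c = c :=
  boxRetract_of_mem (image_Iic_subset_Icc_boxSeq hmono n) hc

variable (hμ : Function.Surjective μ)
include hμ

theorem stageRetract_mem (n : ℕ) (c : ℕ →₀ ℤ) : stageRetract μ n c ∈ μ '' Set.Iic n :=
  boxRetract_mem (boxSeq_nonneg _) (Icc_boxSeq_subset_image_Iic hmono hμ n) c

theorem range_stageRetract (n : ℕ) : Set.range (stageRetract μ n) = μ '' Set.Iic n :=
  (Set.range_subset_iff.2 (stageRetract_mem hmono hμ n)).antisymm fun c hc =>
    ⟨c, stageRetract_of_mem hmono hc⟩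

theorem stageRetract_comp_stageRetract_of_le {m n : ℕ} (hnm : n ≤ m) :
    stageRetract μ m ∘ stageRetract μ n = stageRetract μ n :=
  funext fun c => stageRetract_of_mem hmono
    (Set.image_mono (Set.Iic_subset_Iic.2 hnm) (stageRetract_mem hmono hμ n c))

theorem stageRetract_comp_stageRetract_of_ge {m n : ℕ} (hnm : n ≤ m) :
    stageRetract μ n ∘ stageRetract μ m = stageRetract μ n := by
  funext c
  rcases (hmono hnm).lt_or_eq with hlt | heq
  · exact boxRetract_boxRetract_of_le (boxSeq_mono (Nat.sub_le _ 1))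
      (boxSeq_mono (Nat.le_sub_one_of_lt hlt)) (boxSeq_mono (Nat.sub_le _ 1)) c
  · have hsub := Icc_boxSeq_subset_image_Iic hmono hμ n
    have heq : boxLevel (μ n) = boxLevel (μ m) := heq
    unfold stageRetract
    rw [heq] at hsub ⊢
    exact boxRetract_boxRetract_of_subset (boxSeq_nonneg _) (boxSeq_mono (Nat.sub_le _ 1)) hsub
      (Set.image_mono (Set.Iic_subset_Iic.2 hnm)) c

end Stages

theorem le_sInf_add_two_mul_sInf_mul {U B : Set ℝ} (hU : U.Nonempty) (hB : B.Nonempty)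
    {r d : ℝ} (hd : 0 ≤ d) (h : ∀ u ∈ U, ∀ b ∈ B, r ≤ (u + 2 * b) * d) :
    r ≤ (sInf U + 2 * sInf B) * d := by
  rcases hd.eq_or_lt with rfl | hd
  · obtain ⟨⟨u, hu⟩, ⟨b, hb⟩⟩ := And.intro hU hB
    simpa using h u hu b hb
  simp only [← div_le_iff₀ hd] at h ⊢
  have hb : ∀ u ∈ U, (r / d - u) / 2 ≤ sInf B := fun u hu =>
    le_csInf hB fun b hb => by linarith [h u hu b hb]
  have hu : r / d - 2 * sInf B ≤ sInf U := le_csInf hU fun u hu => by linarith [hb u hu]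
  linarith

theorem norm_gridPoint_stageRetract_sub_le {Y : Type*} [NormedAddCommGroup Y] [NormedSpace ℝ Y]
    [CompleteSpace Y] {e : ℕ → Y} (hnorm : ∀ i, ‖e i‖ = 1) (hb : IsUnconditionalSchauderBasis e)
    {μ : ℕ → ℕ →₀ ℤ} (hmono : Monotone (boxLevel ∘ μ)) (n : ℕ) (x y : ℕ →₀ ℤ) :
    ‖gridPoint e (stageRetract μ n x) - gridPoint e (stageRetract μ n y)‖ ≤
      (unconditionalConstant e + 2 * basisConstant e) * ‖gridPoint e x - gridPoint e y‖ := by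
  rw [unconditionalConstant_eq_sInf, basisConstant_eq_sInf]
  refine le_sInf_add_two_mul_sInf_mul hb.unconditionalBounds_nonempty hb.1.basisBounds_nonempty
    (norm_nonneg _) fun Cu hCu Cb hCb => norm_gridPoint_boxRetract_sub_le hnorm hCu hCb
      (boxSeq_mono (Nat.sub_le _ 1)) (fun c hc => ?_) x y
  exact norm_gridPoint_sub_clampBox_le_one hnorm (boxSeq_le_pred_add_single _)
    (image_Iic_subset_Icc_boxSeq hmono n hc)

/-- For the integer grid `M = M(E)` of a normalized unconditional basis
`E` of a Banach space, there are distinct points `μ n ∈ M` and retractions `φ n : M → M`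
onto `{μ 0, …, μ n}`, with `⋃ {μ n}` dense in `M`, each `φ n` Lipschitz with constant
`uc(E) + 2 bc(E)`, and `φ m ∘ φ n = φ n ∘ φ m = φ n` for `n ≤ m`. -/
theorem stmt_15 (Y : Type) [NormedAddCommGroup Y] [NormedSpace ℝ Y] [CompleteSpace Y]
    (e : ℕ → Y) (hnorm : ∀ i : ℕ, ‖e i‖ = 1)
    (hbasis : IsUnconditionalSchauderBasis e) :
    ∃ (μ : ℕ → ↥(integerGrid e)) (φ : ℕ → (↥(integerGrid e) → ↥(integerGrid e))),
      Function.Injective μ ∧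
      (∀ n : ℕ, Set.range (φ n) = μ '' Set.Iic n) ∧
      (∀ n : ℕ, ∀ j ≤ n, φ n (μ j) = μ j) ∧
      closure (Subtype.val '' Set.range μ) = integerGrid e ∧
      (∀ (n : ℕ) (x y : ↥(integerGrid e)),
        dist (φ n x) (φ n y) ≤ (unconditionalConstant e + 2 * basisConstant e) * dist x y) ∧
      (∀ m n : ℕ, n ≤ m → φ m ∘ φ n = φ n ∧ φ n ∘ φ m = φ n) := by
  obtain ⟨μ, hμ, hmono⟩ := exists_bijective_monotone_comp boxLevel finite_boxLevel_preimage
  let g := gridEquiv hnorm hbasis.1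
  have hconj : ∀ n m, (g ∘ stageRetract μ m ∘ g.symm) ∘ (g ∘ stageRetract μ n ∘ g.symm) =
      g ∘ (stageRetract μ m ∘ stageRetract μ n) ∘ g.symm := fun n m => by
    ext x
    simp
  refine ⟨g ∘ μ, fun n => g ∘ stageRetract μ n ∘ g.symm, g.injective.comp hμ.1, fun n => ?_,
    fun n j hj => ?_, ?_, fun n x y => ?_, fun m n hnm => ⟨?_, ?_⟩⟩
  · rw [Set.range_comp, g.symm.surjective.range_comp, range_stageRetract hmono hμ.2,
      Set.image_comp]
  · simp [stageRetract_of_mem hmono ⟨j, hj, rfl⟩]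
  · rw [(g.surjective.comp hμ.2).range_eq, Set.image_univ, Subtype.range_coe,
      (isClosed_integerGrid hnorm hbasis.1.basisBounds_nonempty).closure_eq]
  · obtain ⟨c, rfl⟩ := g.surjective x
    obtain ⟨d, rfl⟩ := g.surjective y
    simpa [Subtype.dist_eq, dist_eq_norm, g, coe_gridEquiv] using
      norm_gridPoint_stageRetract_sub_le hnorm hbasis hmono n c d
  · rw [hconj, stageRetract_comp_stageRetract_of_le hmono hμ.2 hnm]
  · rw [hconj, stageRetract_comp_stageRetract_of_ge hmono hμ.2 hnm]
end
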